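/- arXiv:1705.03990 — 7 statements merged into one kernel-verified Lean document; each statement's English description precedes it below -/
import Mathlib

section
/- Let f : ℝ³ → ℝ be Lebesgue measurable, nonnegative almost everywhere, strictly positive on a set of positive Lebesgue measure, and satisfy ∫_{ℝ³} p⁰(p)·f(p) dp < ∞, where p⁰(p) := √(1+|p|²). Define the 4×4 real matrix T by T_{αβ} := ∫_{ℝ³} p^α p^β f(p)/p⁰(p) dp for α,β ∈ {0,1,2,3}, where p¹,p²,p³ are the components of p and p⁰ is as above. Then T is symmetric and positive definite; in particular, for every nonzero X ∈ ℝ⁴ one has Xᵀ T X = ∫_{ℝ³} (Σ_{α=0}^{3} X_α p^α)² f(p)/p⁰(p) dp > 0. -/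
/-!
For `X ≠ 0`, `X ⬝ᵥ pVec p = X₀ p⁰ + X'·p` and `Xᵀ T X = ∫ (X ⬝ᵥ pVec p)² f/p⁰`, so positive
definiteness comes down to the zero set of `p ↦ X₀ p⁰ + X'·p` being Lebesgue-null. This set meets
each line in the direction `X'` at most once: squaring the equations at two zeros `p` and
`p + t X'` with `t ≠ 0` gives `(X₀² - |X'|²)(2 X'·p + t |X'|²) = 0`. If `X₀² = |X'|²`,
Cauchy–Schwarz and `p⁰² = 1 + |p|²` force `X₀ = 0`; otherwise `X₀ (p⁰(p) + p⁰(p + t X')) = 0`.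
Either way `X₀ = 0`, and then `X' = 0`. A measurable set meeting every line of a fixed direction
at most once is disjoint from its translates along that direction, hence null.
-/

open MeasureTheory Matrix

/-- On-shell energy `p⁰(p) = √(1 + |p|²)` (units `m = c = 1`). -/
noncomputable def pZero (p : Fin 3 → ℝ) : ℝ := Real.sqrt (1 + ∑ i, p i ^ 2)

/-- The momentum 4-vector `(p⁰, p¹, p², p³)` of a particle with momentum `p ∈ ℝ³`. -/
noncomputable def pVec (p : Fin 3 → ℝ) : Fin 4 → ℝ := ![pZero p, p 0, p 1, p 2]

/-- The energy–momentum tensor `T_{αβ} = ∫ p^α p^β f(p)/p⁰(p) dp`. -/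
noncomputable def Tmat (f : (Fin 3 → ℝ) → ℝ) : Matrix (Fin 4) (Fin 4) ℝ :=
  Matrix.of fun α β => ∫ p : Fin 3 → ℝ, pVec p α * pVec p β * f p / pZero p

theorem addHaar_eq_zero_of_add_smul_notMem {E : Type*} [NormedAddCommGroup E] [NormedSpace ℝ E]
    [MeasurableSpace E] [BorelSpace E] [FiniteDimensional ℝ E] (μ : Measure E)
    [μ.IsAddHaarMeasure] {s : Set E} (hs : MeasurableSet s) (v : E)
    (h : ∀ x ∈ s, ∀ t : ℝ, t ≠ 0 → x + t • v ∉ s) : μ s = 0 := by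
  set u : ℕ → E := fun n => ((n : ℝ) + 1)⁻¹ • v
  have hu : Bornology.IsBounded (Set.range u) := by
    refine (Metric.isBounded_closedBall (x := 0) (r := ‖v‖)).subset ?_
    rintro _ ⟨n, rfl⟩
    rw [mem_closedBall_zero_iff, norm_smul, Real.norm_of_nonneg (by positivity)]
    exact mul_le_of_le_one_left (norm_nonneg v) (inv_le_one_of_one_le₀ (by simp))
  refine Measure.addHaar_eq_zero_of_disjoint_translates μ u hu (fun m n hmn => ?_) hs
  simp only [Function.onFun, Set.singleton_add, Set.disjoint_left]
  rintro _ ⟨x, hx, rfl⟩ ⟨y, hy, hxy⟩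
  have hne : ((m : ℝ) + 1)⁻¹ - ((n : ℝ) + 1)⁻¹ ≠ 0 := by
    rw [sub_ne_zero, ne_eq, _root_.inv_inj, add_left_inj, Nat.cast_inj]
    exact hmn
  refine h x hx _ hne ?_
  convert hy using 1
  linear_combination (norm := module) -hxy

theorem sq_dotProduct_mul_eq_sum {ι : Type*} [Fintype ι] (X u : ι → ℝ) (c : ℝ) :
    (X ⬝ᵥ u) ^ 2 * c = ∑ i, ∑ j, X i * X j * (u i * u j * c) := by
  rw [dotProduct, sq, Fintype.sum_mul_sum, Finset.sum_mul]
  refine Finset.sum_congr rfl fun i _ => ?_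
  rw [Finset.sum_mul]
  exact Finset.sum_congr rfl fun j _ => by ring

section WeightedGram

variable {Ω ι : Type*} [MeasurableSpace Ω] (μ : Measure Ω) (v : Ω → ι → ℝ)
  (w : Ω → ℝ)

noncomputable def weightedGram : Matrix ι ι ℝ :=
  of fun i j => ∫ x, v x i * v x j * w x ∂μ

theorem weightedGram_isSymm : (weightedGram μ v w).IsSymm := by
  ext i j
  simp only [weightedGram, transpose_apply, of_apply, mul_comm (v _ i)]

variable [Fintype ι] {μ v w}

theorem integrable_sq_dotProduct_mul
    (hint : ∀ i j, Integrable (fun x => v x i * v x j * w x) μ) (X : ι → ℝ) :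
    Integrable (fun x => (X ⬝ᵥ v x) ^ 2 * w x) μ := by
  simp only [sq_dotProduct_mul_eq_sum]
  exact integrable_finsetSum _ fun i _ =>
    integrable_finsetSum _ fun j _ => (hint i j).const_mul _

theorem dotProduct_weightedGram_mulVec
    (hint : ∀ i j, Integrable (fun x => v x i * v x j * w x) μ) (X : ι → ℝ) :
    X ⬝ᵥ weightedGram μ v w *ᵥ X = ∫ x, (X ⬝ᵥ v x) ^ 2 * w x ∂μ := by
  simp only [sq_dotProduct_mul_eq_sum]
  rw [integral_finsetSum _ fun i _ =>
    integrable_finsetSum _ fun j _ => (hint i j).const_mul _]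
  simp only [integral_finsetSum _ fun j _ => (hint _ j).const_mul _, integral_const_mul,
    dotProduct, mulVec, weightedGram, of_apply, Finset.mul_sum]
  exact Finset.sum_congr rfl fun i _ => Finset.sum_congr rfl fun j _ => by ring

theorem integral_sq_dotProduct_mul_pos
    (hint : ∀ i j, Integrable (fun x => v x i * v x j * w x) μ) (hw : 0 ≤ᵐ[μ] w)
    (hpos : 0 < μ {x | 0 < w x}) {X : ι → ℝ} (hX : μ {x | X ⬝ᵥ v x = 0} = 0) :
    0 < ∫ x, (X ⬝ᵥ v x) ^ 2 * w x ∂μ := by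
  have hnonneg : 0 ≤ᵐ[μ] fun x => (X ⬝ᵥ v x) ^ 2 * w x := by
    filter_upwards [hw] with x hx using mul_nonneg (sq_nonneg _) hx
  rw [integral_pos_iff_support_of_nonneg_ae hnonneg (integrable_sq_dotProduct_mul hint X)]
  calc 0 < μ {x | 0 < w x} := hpos
    _ = μ ({x | 0 < w x} \ {x | X ⬝ᵥ v x = 0}) := (measure_sdiff_null hX).symm
    _ ≤ μ (Function.support fun x => (X ⬝ᵥ v x) ^ 2 * w x) :=
      measure_mono fun x ⟨hwx, hXx⟩ => mul_ne_zero (pow_ne_zero 2 hXx) hwx.ne'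

theorem weightedGram_posDef
    (hint : ∀ i j, Integrable (fun x => v x i * v x j * w x) μ) (hw : 0 ≤ᵐ[μ] w)
    (hpos : 0 < μ {x | 0 < w x}) (hX : ∀ X : ι → ℝ, X ≠ 0 → μ {x | X ⬝ᵥ v x = 0} = 0) :
    (weightedGram μ v w).PosDef := by
  refine PosDef.of_dotProduct_mulVec_pos ?_ fun X hX0 => ?_
  · exact isHermitian_iff_isSymm.mpr (weightedGram_isSymm μ v w)
  · rw [star_trivial, dotProduct_weightedGram_mulVec hint]
    exact integral_sq_dotProduct_mul_pos hint hw hpos (hX X hX0)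

end WeightedGram

theorem sq_pZero (p : Fin 3 → ℝ) : pZero p ^ 2 = 1 + ∑ i, p i ^ 2 :=
  Real.sq_sqrt (by positivity)

theorem pZero_pos (p : Fin 3 → ℝ) : 0 < pZero p :=
  Real.sqrt_pos.mpr (by positivity)

theorem continuous_pZero : Continuous pZero := by
  unfold pZero; fun_prop

theorem continuous_pVec : Continuous pVec := by
  refine continuous_pi fun α => ?_
  fin_cases α
  exacts [continuous_pZero, continuous_apply 0, continuous_apply 1, continuous_apply 2]

theorem abs_pVec_le (p : Fin 3 → ℝ) (α : Fin 4) : |pVec p α| ≤ pZero p := by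
  have hcoord (i : Fin 3) : |p i| ≤ pZero p := by
    rw [← Real.sqrt_sq_eq_abs]
    refine Real.sqrt_le_sqrt ?_
    linarith [Finset.single_le_sum (fun j _ => sq_nonneg (p j)) (Finset.mem_univ i)]
  fin_cases α
  exacts [(abs_of_pos (pZero_pos p)).le, hcoord 0, hcoord 1, hcoord 2]

theorem dotProduct_pVec (X : Fin 4 → ℝ) (p : Fin 3 → ℝ) :
    X ⬝ᵥ pVec p = X 0 * pZero p + ∑ i, Fin.tail X i * p i := by
  rw [dotProduct, Fin.sum_univ_succ]
  rfl

theorem dotProduct_pVec_add_smul_tail_ne_zero {X : Fin 4 → ℝ} (hX : X ≠ 0) {p : Fin 3 → ℝ}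
    (hp : X ⬝ᵥ pVec p = 0) {t : ℝ} (ht : t ≠ 0) :
    X ⬝ᵥ pVec (p + t • Fin.tail X) ≠ 0 := by
  intro hq
  rw [dotProduct_pVec] at hp hq
  have hP := sq_pZero p
  have hQ := sq_pZero (p + t • Fin.tail X)
  set a := X 0
  set c := Fin.tail X
  set s := ∑ i, c i * p i
  set C := ∑ i, c i ^ 2
  set P := pZero p
  set Q := pZero (p + t • c)
  have hq' : a * Q + s + t * C = 0 := by
    have : ∑ i, c i * (p + t • c) i = s + t * C := by
      rw [Finset.mul_sum, ← Finset.sum_add_distrib]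
      refine Finset.sum_congr rfl fun i _ => ?_
      simp only [Pi.add_apply, Pi.smul_apply, smul_eq_mul]
      ring
    linear_combination hq - this
  have hQ' : Q ^ 2 = P ^ 2 + 2 * t * s + t ^ 2 * C := by
    rw [hQ, hP, Finset.mul_sum, Finset.mul_sum, add_assoc, add_assoc, ← Finset.sum_add_distrib,
      ← Finset.sum_add_distrib]
    congr 1
    refine Finset.sum_congr rfl fun i _ => ?_
    simp only [Pi.add_apply, Pi.smul_apply, smul_eq_mul]
    ring
  have hCS : s ^ 2 ≤ C * (P ^ 2 - 1) := by
    rw [hP, add_sub_cancel_left]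
    exact Finset.sum_mul_sq_le_sq_mul_sq _ _ _
  have hfactor : t * ((a ^ 2 - C) * (2 * s + t * C)) = 0 := by
    linear_combination (a * Q - s - t * C) * hq' - (a * P - s) * hp - a ^ 2 * hQ'
  have ha : a = 0 := by
    rcases (mul_eq_zero.mp hfactor).resolve_left ht |> mul_eq_zero.mp with h | h
    · have hs : s = -(a * P) := by linear_combination hp
      rw [hs, show C = a ^ 2 by linear_combination -h] at hCS
      exact pow_eq_zero_iff two_ne_zero |>.mp (le_antisymm (by nlinarith) (sq_nonneg a))
    · have hPQ : 0 < P + Q := add_pos (pZero_pos p) (pZero_pos _)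
      exact (mul_eq_zero.mp (by linear_combination hq' + hp - h : a * (P + Q) = 0)).resolve_right
        hPQ.ne'
  have hC : C = 0 := by
    refine (mul_eq_zero.mp ?_).resolve_left ht
    linear_combination hq' - hp - (Q - P) * ha
  have hc : c = 0 := by
    funext i
    refine pow_eq_zero_iff two_ne_zero |>.mp ?_
    exact (Finset.sum_eq_zero_iff_of_nonneg fun j _ => sq_nonneg (c j)).mp hC i
      (Finset.mem_univ i)
  exact hX (funext fun α => Fin.cases ha (fun i => congr_fun hc i) α)

theorem volume_dotProduct_pVec_eq_zero {X : Fin 4 → ℝ} (hX : X ≠ 0) :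
    volume {p : Fin 3 → ℝ | X ⬝ᵥ pVec p = 0} = 0 :=
  addHaar_eq_zero_of_add_smul_notMem volume
    (measurableSet_eq_fun (continuous_const.dotProduct continuous_pVec).measurable
      measurable_const) (Fin.tail X) fun _ hp _ ht => dotProduct_pVec_add_smul_tail_ne_zero hX hp ht

theorem integrable_pVec_mul_pVec_mul_div {f : (Fin 3 → ℝ) → ℝ}
    (hint : Integrable (fun p => pZero p * f p)) (α β : Fin 4) :
    Integrable (fun p => pVec p α * pVec p β * (f p / pZero p)) := by
  have hf : AEStronglyMeasurable f := by
    have : (fun p => pZero p * f p / pZero p) = f :=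
      funext fun p => mul_div_cancel_left₀ (f p) (pZero_pos p).ne'
    exact this ▸ hint.aestronglyMeasurable.div₀ continuous_pZero.aestronglyMeasurable
  have hv (γ : Fin 4) : AEStronglyMeasurable fun p => pVec p γ :=
    ((continuous_apply γ).comp continuous_pVec).aestronglyMeasurable
  refine hint.norm.mono' (((hv α).mul (hv β)).mul (hf.div₀ continuous_pZero.aestronglyMeasurable))
    (Filter.Eventually.of_forall fun p => ?_)
  have hP := pZero_pos p
  have hαβ : |pVec p α| * |pVec p β| ≤ pZero p * pZero p :=
    mul_le_mul (abs_pVec_le p α) (abs_pVec_le p β) (abs_nonneg _) hP.le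
  rw [Real.norm_eq_abs, Real.norm_eq_abs, abs_mul, abs_mul, abs_mul, abs_div, abs_of_pos hP,
    ← mul_div_assoc, div_le_iff₀ hP]
  nlinarith [abs_nonneg (f p)]

theorem Tmat_eq_weightedGram (f : (Fin 3 → ℝ) → ℝ) :
    Tmat f = weightedGram volume pVec (fun p => f p / pZero p) := by
  ext α β
  simp only [Tmat, weightedGram, of_apply, mul_div_assoc]

theorem stmt0_general (f : (Fin 3 → ℝ) → ℝ)
    (hnn : ∀ᵐ p : Fin 3 → ℝ, 0 ≤ f p)
    (hpos : 0 < volume {p : Fin 3 → ℝ | 0 < f p})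
    (hint : Integrable (fun p : Fin 3 → ℝ => pZero p * f p)) :
    (Tmat f).IsSymm ∧ (Tmat f).PosDef ∧
      ∀ X : Fin 4 → ℝ, X ≠ 0 →
        X ⬝ᵥ (Tmat f) *ᵥ X
            = ∫ p : Fin 3 → ℝ, (∑ α, X α * pVec p α) ^ 2 * f p / pZero p ∧
          0 < X ⬝ᵥ (Tmat f) *ᵥ X := by
  have hentry := integrable_pVec_mul_pVec_mul_div hint
  have hw : 0 ≤ᵐ[volume] fun p => f p / pZero p := by
    filter_upwards [hnn] with p hp using div_nonneg hp (pZero_pos p).le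
  have hwpos : 0 < volume {p | 0 < f p / pZero p} := by
    simpa only [div_pos_iff_of_pos_right (pZero_pos _)] using hpos
  have hnull (X : Fin 4 → ℝ) (hX : X ≠ 0) := volume_dotProduct_pVec_eq_zero hX
  rw [Tmat_eq_weightedGram]
  refine ⟨weightedGram_isSymm _ _ _, weightedGram_posDef hentry hw hwpos hnull,
    fun X hX => ⟨?_, ?_⟩⟩ <;> rw [dotProduct_weightedGram_mulVec hentry]
  · simp_rw [mul_div_assoc]
    rfl
  · exact integral_sq_dotProduct_mul_pos hentry hw hwpos (hnull X hX)

theorem stmt0 (f : (Fin 3 → ℝ) → ℝ)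
    (hmeas : Measurable f)
    (hnn : ∀ᵐ p : Fin 3 → ℝ, 0 ≤ f p)
    (hpos : 0 < volume {p : Fin 3 → ℝ | 0 < f p})
    (hint : Integrable (fun p : Fin 3 → ℝ => pZero p * f p)) :
    (Tmat f).IsSymm ∧ (Tmat f).PosDef ∧
      ∀ X : Fin 4 → ℝ, X ≠ 0 →
        X ⬝ᵥ (Tmat f) *ᵥ X
            = ∫ p : Fin 3 → ℝ, (∑ α, X α * pVec p α) ^ 2 * f p / pZero p ∧
          0 < X ⬝ᵥ (Tmat f) *ᵥ X :=
  stmt0_general f hnn hpos hint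
end

section
/- Let T be a real symmetric positive-definite 4×4 matrix and let g := diag(1,−1,−1,−1) be the Minkowski metric matrix. Then the matrix g·T is diagonalizable over ℝ with all eigenvalues real and nonzero, exactly one eigenvalue is positive and this positive eigenvalue is simple, while the other three eigenvalues are negative. Moreover, every eigenvector U = (U₀,U₁,U₂,U₃) of g·T associated with the positive eigenvalue satisfies Uᵀ g U > 0, i.e. U₀² > U₁² + U₂² + U₃²; consequently U₀ ≠ 0 and the vector u := −(U₁,U₂,U₃)/U₀ ∈ ℝ³ satisfies |u| < 1. -/
/-!
Write `T = Bᵀ B` with `B` invertible. Then `g T = B⁻¹ (B g Bᵀ) B` is similar to the symmetric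
matrix `A = B g Bᵀ`, so it is diagonalizable over `ℝ` with the eigenvalues of `A`. These have the
signature of `g` (Sylvester's law of inertia): `det A = -(det B)² < 0`, and two positive eigenvalues
would give a plane on which `w ↦ (Bᵀ w)ᵀ g (Bᵀ w)` is positive definite, whereas this form is
nonpositive on the hyperplane `(Bᵀ w)₀ = 0`. Finally, if `g T U = ε U` then `T U = ε g U`, so
`ε Uᵀ g U = Uᵀ T U > 0`.
-/

open Matrix

namespace Matrix

variable {n : Type*} [Fintype n]

lemma isHermitian_mul_mul_transpose {M : Matrix n n ℝ} (hM : M.IsHermitian) (B : Matrix n n ℝ) :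
    (B * M * Bᵀ).IsHermitian := by
  simpa only [conjTranspose_eq_transpose_of_trivial] using isHermitian_mul_mul_conjTranspose B hM

lemma dotProduct_mul_mul_transpose_mulVec (B M : Matrix n n ℝ) (w : n → ℝ) :
    w ⬝ᵥ (B * M * Bᵀ) *ᵥ w = (Bᵀ *ᵥ w) ⬝ᵥ M *ᵥ (Bᵀ *ᵥ w) := by
  rw [← mulVec_mulVec, ← mulVec_mulVec, dotProduct_mulVec, mulVec_transpose]

variable [DecidableEq n]

lemma PosDef.exists_isUnit_eq_transpose_mul_self {T : Matrix n n ℝ} (hT : T.PosDef) :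
    ∃ B : Matrix n n ℝ, IsUnit B ∧ T = Bᵀ * B := by
  open scoped MatrixOrder in
  obtain ⟨B, hB, rfl⟩ :=
    CStarAlgebra.isStrictlyPositive_iff_eq_star_mul_self.mp hT.isStrictlyPositive
  exact ⟨B, hB, by rw [star_eq_conjTranspose, conjTranspose_eq_transpose_of_trivial]⟩

lemma exists_isUnit_mul_transpose_mul_self_eq {B M V D : Matrix n n ℝ} (hB : IsUnit B)
    (hV : IsUnit V) (h : B * M * Bᵀ = V * D * V⁻¹) :
    ∃ P : Matrix n n ℝ, IsUnit P ∧ M * (Bᵀ * B) = P * D * P⁻¹ := by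
  have hB' : IsUnit B.det := (isUnit_iff_isUnit_det B).mp hB
  refine ⟨B⁻¹ * V, (isUnit_nonsing_inv_iff.mpr hB).mul hV, ?_⟩
  rw [mul_inv_rev, nonsing_inv_nonsing_inv _ hB']
  calc M * (Bᵀ * B) = B⁻¹ * (B * M * Bᵀ) * B := by
        simp only [← Matrix.mul_assoc, nonsing_inv_mul _ hB', Matrix.one_mul]
    _ = _ := by rw [h]; simp only [Matrix.mul_assoc]

lemma dotProduct_mulVec_pos_of_mul_mulVec_eq_smul {g T : Matrix n n ℝ} (hg : g * g = 1)
    (hT : T.PosDef) {ε : ℝ} (hε : 0 < ε) {U : n → ℝ} (hU : U ≠ 0)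
    (h : (g * T) *ᵥ U = ε • U) : 0 < U ⬝ᵥ g *ᵥ U := by
  have hTU : T *ᵥ U = ε • (g *ᵥ U) := by
    rw [← mulVec_smul, ← h, mulVec_mulVec, ← Matrix.mul_assoc, hg, Matrix.one_mul]
  have hpos := hT.dotProduct_mulVec_pos hU
  rw [star_trivial, hTU, dotProduct_smul, smul_eq_mul] at hpos
  exact pos_of_mul_pos_right hpos hε.le

namespace IsHermitian

variable {A : Matrix n n ℝ} (hA : A.IsHermitian)

lemma exists_isUnit_eq_mul_diagonal_mul_inv :
    ∃ V : Matrix n n ℝ, IsUnit V ∧ A = V * diagonal hA.eigenvalues * V⁻¹ := by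
  set V : Matrix n n ℝ := (hA.eigenvectorUnitary : Matrix n n ℝ)
  have hV : star V * V = 1 := Unitary.coe_star_mul_self _
  refine ⟨V, .of_mul_eq_one_right _ hV, ?_⟩
  conv_lhs => rw [hA.spectral_theorem, Unitary.conjStarAlgAut_apply]
  rw [inv_eq_left_inv hV]
  rfl

lemma dotProduct_eigenvectorBasis (i j : n) :
    ⇑(hA.eigenvectorBasis i) ⬝ᵥ ⇑(hA.eigenvectorBasis j) = if i = j then 1 else 0 := by
  rw [← orthonormal_iff_ite.mp hA.eigenvectorBasis.orthonormal i j,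
    EuclideanSpace.inner_eq_star_dotProduct, star_trivial, dotProduct_comm]

lemma dotProduct_mulVec_smul_add_smul_eigenvectorBasis {i j : n} (hij : i ≠ j) (a b : ℝ) :
    (a • ⇑(hA.eigenvectorBasis i) + b • ⇑(hA.eigenvectorBasis j)) ⬝ᵥ
        A *ᵥ (a • ⇑(hA.eigenvectorBasis i) + b • ⇑(hA.eigenvectorBasis j)) =
      a ^ 2 * hA.eigenvalues i + b ^ 2 * hA.eigenvalues j := by
  simp only [mulVec_add, mulVec_smul, hA.mulVec_eigenvectorBasis, add_dotProduct, dotProduct_add,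
    smul_dotProduct, dotProduct_smul, hA.dotProduct_eigenvectorBasis, hij, hij.symm, if_true,
    if_false, smul_eq_mul]
  ring

/-- The eigenvectors of two positive eigenvalues would span a plane on which the form is positive
definite, and that plane meets the hyperplane `ℓ = 0`. -/
lemma eq_of_eigenvalues_pos (ℓ : (n → ℝ) →ₗ[ℝ] ℝ) (hℓ : ∀ w, ℓ w = 0 → w ⬝ᵥ A *ᵥ w ≤ 0)
    {i j : n} (hi : 0 < hA.eigenvalues i) (hj : 0 < hA.eigenvalues j) : i = j := by
  by_contra hij
  set u := ⇑(hA.eigenvectorBasis i)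
  set v := ⇑(hA.eigenvectorBasis j)
  have hplane : ∀ a b : ℝ, a ≠ 0 ∨ b ≠ 0 → ℓ (a • u + b • v) ≠ 0 := by
    intro a b hab hℓab
    have hform := hℓ _ hℓab
    rw [hA.dotProduct_mulVec_smul_add_smul_eigenvectorBasis hij] at hform
    rcases hab with ha | hb
    · nlinarith [mul_pos (sq_pos_of_ne_zero ha) hi, mul_nonneg (sq_nonneg b) hj.le]
    · nlinarith [mul_pos (sq_pos_of_ne_zero hb) hj, mul_nonneg (sq_nonneg a) hi.le]
  by_cases hu : ℓ u = 0
  · exact hplane 1 0 (.inl one_ne_zero) (by simpa using hu)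
  · refine hplane (ℓ v) (-ℓ u) (.inr (neg_ne_zero.mpr hu)) ?_
    rw [map_add, map_smul, map_smul, smul_eq_mul, smul_eq_mul]
    ring

end IsHermitian

end Matrix

lemma exists_pos_and_forall_ne_neg_of_prod_neg {ι : Type*} [Fintype ι]
    (hι : Even (Fintype.card ι)) {d : ι → ℝ} (hprod : ∏ i, d i < 0)
    (hpos : ∀ i j, 0 < d i → 0 < d j → i = j) :
    (∀ i, d i ≠ 0) ∧ ∃ i, 0 < d i ∧ ∀ j, j ≠ i → d j < 0 := by
  have hne : ∀ i, d i ≠ 0 := fun i hi => hprod.ne (Finset.prod_eq_zero (Finset.mem_univ i) hi)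
  refine ⟨hne, ?_⟩
  obtain ⟨i, hi⟩ : ∃ i, 0 < d i := by
    by_contra! hnonpos
    have : 0 < ∏ i, -d i :=
      Finset.prod_pos fun i _ => neg_pos.mpr ((hnonpos i).lt_of_ne (hne i))
    rw [Finset.prod_neg, Finset.card_univ, hι.neg_one_pow, one_mul] at this
    exact hprod.not_gt this
  exact ⟨i, hi, fun j hji => (le_of_not_gt fun hj => hji (hpos j i hj hi)).lt_of_ne (hne j)⟩

local notation "η" => (diagonal ![1, -1, -1, -1] : Matrix (Fin 4) (Fin 4) ℝ)

lemma minkowski_mul_self : η * η = 1 := by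
  rw [diagonal_mul_diagonal, ← diagonal_one]
  congr 1
  ext i
  fin_cases i <;> norm_num

lemma det_minkowski : det η = -1 := by
  simp [Fin.prod_univ_four]

lemma dotProduct_minkowski_mulVec (x : Fin 4 → ℝ) :
    x ⬝ᵥ η *ᵥ x = x 0 ^ 2 - x 1 ^ 2 - x 2 ^ 2 - x 3 ^ 2 := by
  simp only [dotProduct, mulVec_diagonal, Fin.sum_univ_four, Fin.isValue, cons_val_zero, one_mul,
    cons_val_one, neg_mul, mul_neg, cons_val]
  ring

lemma dotProduct_minkowski_mulVec_nonpos {x : Fin 4 → ℝ} (hx : x 0 = 0) :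
    x ⬝ᵥ η *ᵥ x ≤ 0 := by
  rw [dotProduct_minkowski_mulVec, hx]
  nlinarith [sq_nonneg (x 1), sq_nonneg (x 2), sq_nonneg (x 3)]

lemma minkowski_timelike_velocity_lt_one {x : Fin 4 → ℝ} (hx : 0 < x ⬝ᵥ η *ᵥ x) :
    x 1 ^ 2 + x 2 ^ 2 + x 3 ^ 2 < x 0 ^ 2 ∧ x 0 ≠ 0 ∧
      (-(x 1 / x 0)) ^ 2 + (-(x 2 / x 0)) ^ 2 + (-(x 3 / x 0)) ^ 2 < 1 := by
  rw [dotProduct_minkowski_mulVec] at hx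
  have hspatial : x 1 ^ 2 + x 2 ^ 2 + x 3 ^ 2 < x 0 ^ 2 := by linarith
  have hx0 : x 0 ≠ 0 := by
    rintro h0
    rw [h0] at hspatial
    nlinarith [sq_nonneg (x 1), sq_nonneg (x 2), sq_nonneg (x 3)]
  refine ⟨hspatial, hx0, ?_⟩
  calc (-(x 1 / x 0)) ^ 2 + (-(x 2 / x 0)) ^ 2 + (-(x 3 / x 0)) ^ 2
      = (x 1 ^ 2 + x 2 ^ 2 + x 3 ^ 2) / x 0 ^ 2 := by ring
    _ < 1 := (div_lt_one (by positivity)).mpr hspatial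

lemma Matrix.IsHermitian.inertia_mul_minkowski_mul_transpose {B : Matrix (Fin 4) (Fin 4) ℝ}
    (hB : IsUnit B) (hA : (B * η * Bᵀ).IsHermitian) :
    (∀ i, hA.eigenvalues i ≠ 0) ∧
      ∃ i, 0 < hA.eigenvalues i ∧ ∀ j, j ≠ i → hA.eigenvalues j < 0 := by
  have hprod : ∏ i, hA.eigenvalues i < 0 := by
    have hdet := hA.det_eq_prod_eigenvalues
    have hB0 : det B ≠ 0 := ((isUnit_iff_isUnit_det B).mp hB).ne_zero
    simp only [det_mul, det_transpose, det_minkowski, RCLike.ofReal_real_eq_id, id] at hdet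
    nlinarith [mul_self_pos.mpr hB0]
  refine exists_pos_and_forall_ne_neg_of_prod_neg (by decide) hprod fun i j hi hj =>
    hA.eq_of_eigenvalues_pos ((LinearMap.proj 0).comp Bᵀ.mulVecLin) (fun w hw => ?_) hi hj
  rw [dotProduct_mul_mul_transpose_mulVec]
  exact dotProduct_minkowski_mulVec_nonpos hw

theorem stmt1 (T g : Matrix (Fin 4) (Fin 4) ℝ)
    (hg : g = Matrix.diagonal ![1, -1, -1, -1])
    (hT : T.PosDef) :
    -- `g·T` is diagonalizable over ℝ, with all eigenvalues real and nonzero,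
    -- exactly one positive (simple) eigenvalue, the other three negative:
    (∃ P : Matrix (Fin 4) (Fin 4) ℝ, IsUnit P ∧
      ∃ d : Fin 4 → ℝ,
        g * T = P * Matrix.diagonal d * P⁻¹ ∧
        (∀ i, d i ≠ 0) ∧
        ∃ i, 0 < d i ∧ ∀ j, j ≠ i → d j < 0) ∧
    -- every eigenvector associated with a positive eigenvalue is timelike:
    ∀ ε : ℝ, 0 < ε → ∀ U : Fin 4 → ℝ, U ≠ 0 → (g * T) *ᵥ U = ε • U →
      0 < U ⬝ᵥ g *ᵥ U ∧
      U 1 ^ 2 + U 2 ^ 2 + U 3 ^ 2 < U 0 ^ 2 ∧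
      U 0 ≠ 0 ∧
      (-(U 1 / U 0)) ^ 2 + (-(U 2 / U 0)) ^ 2 + (-(U 3 / U 0)) ^ 2 < 1 := by
  subst hg
  refine ⟨?_, fun ε hε U hU hεU => ?_⟩
  · obtain ⟨B, hB, rfl⟩ := hT.exists_isUnit_eq_transpose_mul_self
    have hA := isHermitian_mul_mul_transpose (isHermitian_diagonal ![1, -1, -1, -1]) B
    obtain ⟨V, hV, hAV⟩ := hA.exists_isUnit_eq_mul_diagonal_mul_inv
    obtain ⟨P, hP, hdiag⟩ := exists_isUnit_mul_transpose_mul_self_eq hB hV hAV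
    exact ⟨P, hP, hA.eigenvalues, hdiag, hA.inertia_mul_minkowski_mul_transpose hB⟩
  · have hpos := dotProduct_mulVec_pos_of_mul_mulVec_eq_smul minkowski_mul_self hT hε hU hεU
    exact ⟨hpos, minkowski_timelike_velocity_lt_one hpos⟩
end

section
/- For every ζ > 0, K₃(ζ)/K₂(ζ) > 1 + 5/(2ζ), where K_ν(ζ) := ∫₀^∞ cosh(νt)·exp(−ζ·cosh t) dt is the modified Bessel function of the second kind. -/
/-!
Integrating `d/dt [sinh (ν t) exp (-ζ cosh t)]` over `(0, ∞)` gives the recurrence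
`ζ (K_{ν+1} - K_{ν-1}) = 2ν K_ν`. Applied with `ν = 1, 2, 3` it turns `2ζ K₃ - (2ζ + 5) K₂` into
`ζ²/8 · (K₄ - 4K₃ + 4K₂ + 4K₁ - 5K₀)`, and this bracket is the integral of
`8 (cosh t - 1)³ (cosh t + 1) exp (-ζ cosh t) > 0`.
-/

open MeasureTheory Real Set Filter Topology

/-- Modified Bessel function of the second kind,
`K_ν(ζ) = ∫₀^∞ cosh(νt)·exp(−ζ·cosh t) dt`. -/
noncomputable def besselK (ν ζ : ℝ) : ℝ :=
  ∫ t in Set.Ioi (0 : ℝ), Real.cosh (ν * t) * Real.exp (-ζ * Real.cosh t)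

namespace Real

lemma cosh_le_exp_abs (x : ℝ) : cosh x ≤ exp |x| := by
  rw [← cosh_abs, ← cosh_add_sinh]
  linarith [sinh_nonneg_iff.2 (abs_nonneg x)]

lemma abs_sinh_le_exp_abs (x : ℝ) : |sinh x| ≤ exp |x| := by
  rw [abs_sinh, ← cosh_add_sinh]
  linarith [cosh_pos |x|]

lemma eight_mul_cosh_sub_one_pow_three_mul_cosh_add_one (t : ℝ) :
    8 * ((cosh t - 1) ^ 3 * (cosh t + 1)) =
      cosh (4 * t) - 4 * cosh (3 * t) + 4 * cosh (2 * t) + 4 * cosh t - 5 := by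
  have h2 : cosh (2 * t) = 2 * cosh t ^ 2 - 1 := by
    rw [cosh_two_mul, sinh_sq]; ring
  have h4 : cosh (4 * t) = 2 * cosh (2 * t) ^ 2 - 1 := by
    rw [show 4 * t = 2 * (2 * t) by ring, cosh_two_mul, sinh_sq]; ring
  rw [h4, cosh_three_mul, h2]
  ring

end Real

section

variable {ζ : ℝ}

lemma mul_sub_mul_cosh_le (hζ : 0 < ζ) (a : ℝ) {t : ℝ} (ht : 0 ≤ t) :
    a * t - ζ * cosh t ≤ (a + 1) ^ 2 / ζ - t := by
  have hcosh : t ^ 2 / 4 ≤ cosh t := by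
    rw [cosh_eq]
    linarith [quadratic_le_exp_of_nonneg ht, exp_pos (-t)]
  rw [div_sub' hζ.ne', le_div_iff₀ hζ]
  nlinarith [sq_nonneg (ζ * t / 2 - (a + 1)), mul_le_mul_of_nonneg_left hcosh hζ.le]

lemma integrableOn_exp_mul_sub_mul_cosh (hζ : 0 < ζ) (a : ℝ) :
    IntegrableOn (fun t => exp (a * t - ζ * cosh t)) (Ioi 0) := by
  refine ((integrableOn_exp_neg_Ioi 0).const_mul (exp ((a + 1) ^ 2 / ζ))).mono' (by fun_prop) ?_
  filter_upwards [ae_restrict_mem measurableSet_Ioi] with t ht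
  rw [norm_of_nonneg (exp_pos _).le, ← exp_add, ← sub_eq_add_neg]
  exact exp_le_exp.2 (mul_sub_mul_cosh_le hζ a (le_of_lt ht))

lemma tendsto_exp_mul_sub_mul_cosh (hζ : 0 < ζ) (a : ℝ) :
    Tendsto (fun t => exp (a * t - ζ * cosh t)) atTop (𝓝 0) := by
  refine tendsto_exp_atBot.comp (tendsto_atBot_mono' _ ?_
    (tendsto_atBot_add_const_left _ ((a + 1) ^ 2 / ζ) tendsto_neg_atTop_atBot))
  filter_upwards [eventually_ge_atTop 0] with t ht
  exact mul_sub_mul_cosh_le hζ a ht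

lemma integrableOn_cosh_mul_exp (hζ : 0 < ζ) (ν : ℝ) :
    IntegrableOn (fun t => cosh (ν * t) * exp (-ζ * cosh t)) (Ioi 0) := by
  refine (integrableOn_exp_mul_sub_mul_cosh hζ |ν|).mono' (by fun_prop) ?_
  filter_upwards [ae_restrict_mem measurableSet_Ioi] with t ht
  rw [norm_of_nonneg (by positivity), sub_eq_add_neg, exp_add, neg_mul]
  gcongr
  simpa [abs_mul, abs_of_pos (show (0:ℝ) < t from ht)] using cosh_le_exp_abs (ν * t)

lemma tendsto_sinh_mul_exp (hζ : 0 < ζ) (ν : ℝ) :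
    Tendsto (fun t => sinh (ν * t) * exp (-ζ * cosh t)) atTop (𝓝 0) := by
  refine squeeze_zero_norm' ?_ (tendsto_exp_mul_sub_mul_cosh hζ |ν|)
  filter_upwards [eventually_ge_atTop 0] with t ht
  rw [norm_mul, norm_of_nonneg (exp_pos _).le, sub_eq_add_neg, exp_add, neg_mul]
  gcongr
  simpa [abs_mul, abs_of_nonneg ht] using abs_sinh_le_exp_abs (ν * t)

variable {ι : Type*}

lemma integrableOn_sum_cosh_mul_exp (hζ : 0 < ζ) (s : Finset ι) (c ν : ι → ℝ) :
    IntegrableOn (fun t => (∑ i ∈ s, c i * cosh (ν i * t)) * exp (-ζ * cosh t)) (Ioi 0) := by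
  simp_rw [Finset.sum_mul, mul_assoc]
  exact integrable_finsetSum _ fun i _ => (integrableOn_cosh_mul_exp hζ (ν i)).const_mul (c i)

lemma integral_sum_cosh_mul_exp (hζ : 0 < ζ) (s : Finset ι) (c ν : ι → ℝ) :
    ∫ t in Ioi 0, (∑ i ∈ s, c i * cosh (ν i * t)) * exp (-ζ * cosh t) =
      ∑ i ∈ s, c i * besselK (ν i) ζ := by
  simp_rw [Finset.sum_mul, mul_assoc]
  rw [integral_finsetSum _ fun i _ => (integrableOn_cosh_mul_exp hζ (ν i)).const_mul (c i)]
  simp only [integral_const_mul, besselK]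

/-- The derivative is written as a combination of the integrands of `besselK` through
`2 sinh t sinh (ν t) = cosh ((ν + 1) t) - cosh ((ν - 1) t)`. -/
lemma hasDerivAt_sinh_mul_mul_exp (ζ ν t : ℝ) :
    HasDerivAt (fun t => sinh (ν * t) * exp (-ζ * cosh t))
      ((∑ i, ![ν, -ζ / 2, ζ / 2] i * cosh (![ν, ν + 1, ν - 1] i * t)) * exp (-ζ * cosh t)) t := by
  have hsinh : HasDerivAt (fun t => sinh (ν * t)) (cosh (ν * t) * ν) t := by
    simpa using ((hasDerivAt_id t).const_mul ν).sinh
  have hexp : HasDerivAt (fun t => exp (-ζ * cosh t)) (exp (-ζ * cosh t) * (-ζ * sinh t)) t :=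
    ((hasDerivAt_cosh t).const_mul (-ζ)).exp
  refine (hsinh.mul hexp).congr_deriv ?_
  simp only [Fin.sum_univ_three, Matrix.cons_val, add_mul, sub_mul, one_mul, cosh_add, cosh_sub]
  ring

lemma besselK_add_one_sub_besselK_sub_one (hζ : 0 < ζ) (ν : ℝ) :
    ζ * (besselK (ν + 1) ζ - besselK (ν - 1) ζ) = 2 * ν * besselK ν ζ := by
  have h := integral_Ioi_of_hasDerivAt_of_tendsto' (fun t _ => hasDerivAt_sinh_mul_mul_exp ζ ν t)
    (integrableOn_sum_cosh_mul_exp hζ _ _ _) (tendsto_sinh_mul_exp hζ ν)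
  rw [integral_sum_cosh_mul_exp hζ] at h
  simp only [Fin.sum_univ_three, Matrix.cons_val, mul_zero, sinh_zero, zero_mul, sub_zero] at h
  linear_combination -2 * h

lemma setIntegral_Ioi_pos {f : ℝ → ℝ} {a : ℝ} (hf : IntegrableOn f (Ioi a))
    (hpos : ∀ t ∈ Ioi a, 0 < f t) : 0 < ∫ t in Ioi a, f t := by
  rw [setIntegral_pos_iff_support_of_nonneg_ae
    ((ae_restrict_mem measurableSet_Ioi).mono fun t ht => (hpos t ht).le) hf]
  have hsupp : Ioi a ⊆ Function.support f ∩ Ioi a := fun t ht => ⟨(hpos t ht).ne', ht⟩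
  exact (by simp : 0 < volume (Ioi a)).trans_le (measure_mono hsupp)

lemma besselK_pos (hζ : 0 < ζ) (ν : ℝ) : 0 < besselK ν ζ :=
  setIntegral_Ioi_pos (integrableOn_cosh_mul_exp hζ ν) fun t _ => by positivity

lemma besselK_combination_pos (hζ : 0 < ζ) :
    0 < besselK 4 ζ - 4 * besselK 3 ζ + 4 * besselK 2 ζ + 4 * besselK 1 ζ - 5 * besselK 0 ζ := by
  have hpos : ∀ t ∈ Ioi (0 : ℝ), 0 < (∑ i, ![1, -4, 4, 4, -5] i * cosh (![4, 3, 2, 1, 0] i * t)) *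
      exp (-ζ * cosh t) := by
    intro t ht
    have hsum : ∑ i, ![1, -4, 4, 4, -5] i * cosh (![4, 3, 2, 1, 0] i * t) =
        8 * ((cosh t - 1) ^ 3 * (cosh t + 1)) := by
      simp only [Fin.sum_univ_five, Matrix.cons_val, one_mul, zero_mul, cosh_zero]
      linear_combination -eight_mul_cosh_sub_one_pow_three_mul_cosh_add_one t
    have hcosh : 0 < cosh t - 1 := sub_pos.2 (one_lt_cosh.2 (ne_of_gt ht))
    rw [hsum]
    positivity
  have h := setIntegral_Ioi_pos (integrableOn_sum_cosh_mul_exp hζ _ _ _) hpos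
  rw [integral_sum_cosh_mul_exp hζ] at h
  simp only [Fin.sum_univ_five, Matrix.cons_val] at h
  linarith

end

theorem stmt3 : ∀ ζ : ℝ, 0 < ζ → 1 + 5 / (2 * ζ) < besselK 3 ζ / besselK 2 ζ := by
  intro ζ hζ
  have hrec₁ := besselK_add_one_sub_besselK_sub_one hζ 1
  have hrec₂ := besselK_add_one_sub_besselK_sub_one hζ 2
  have hrec₃ := besselK_add_one_sub_besselK_sub_one hζ 3
  norm_num at hrec₁ hrec₂ hrec₃
  have key : 2 * ζ * besselK 3 ζ - (2 * ζ + 5) * besselK 2 ζ = ζ ^ 2 / 8 *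
      (besselK 4 ζ - 4 * besselK 3 ζ + 4 * besselK 2 ζ + 4 * besselK 1 ζ - 5 * besselK 0 ζ) := by
    linear_combination - (ζ / 8) * hrec₃ - (5 * ζ / 8) * hrec₁ + (ζ / 2 + 5 / 4) * hrec₂
  have hK2 := besselK_pos hζ 2
  rw [lt_div_iff₀ hK2, one_add_div (by positivity), div_mul_eq_mul_div, div_lt_iff₀ (by positivity)]
  linarith [mul_pos (pow_pos hζ 2) (besselK_combination_pos hζ)]
end

section
/- Fix ℓ ≥ 1 and ζ > 0. Let (P_k^{(ℓ)}) and (P_k^{(ℓ−1)}) be orthonormal families for the weights ω^{(ℓ)}(·;ζ) and ω^{(ℓ−1)}(·;ζ) respectively, with positive leading coefficients c_k^{(ℓ)} and c_k^{(ℓ−1)}. Define p_k := c_k^{(ℓ−1)}/c_k^{(ℓ)}, r_k := ((2ℓ−1)/(2ℓ+1))·c_{k−1}^{(ℓ)}/c_{k+1}^{(ℓ−1)} (for k ≥ 1), and q_k := ∫₁^∞ P_{k+1}^{(ℓ−1)}(x)·P_k^{(ℓ)}(x)·ω^{(ℓ)}(x;ζ) dx. Then for every k ≥ 0 and all x ∈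 ℝ: ((2ℓ−1)/(2ℓ+1))·(x²−1)·P_k^{(ℓ)}(x) = p_k·P_k^{(ℓ−1)}(x) + q_k·P_{k+1}^{(ℓ−1)}(x) + r_{k+1}·P_{k+2}^{(ℓ−1)}(x), and P_{k+1}^{(ℓ−1)}(x) = r_k·P_{k−1}^{(ℓ)}(x) + q_k·P_k^{(ℓ)}(x) + p_{k+1}·P_{k+1}^{(ℓ)}(x) (with the conventions P_{−1}^{(ℓ)} := 0 and r_0 := 0). -/
open MeasureTheory Polynomial

/-- `K₂(ζ) = ∫₀^∞ cosh(2t)·exp(−ζ·cosh t) dt`. -/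
noncomputable def K2 (ζ : ℝ) : ℝ :=
  ∫ t in Set.Ioi (0 : ℝ), Real.cosh (2 * t) * Real.exp (-ζ * Real.cosh t)

/-- The weight `ω^{(ℓ)}(x;ζ) = ζ·(x²−1)^{ℓ+1/2}·exp(−ζx)/((2ℓ+1)·K₂(ζ))` on `[1,∞)`. -/
noncomputable def wgt (l : ℕ) (ζ : ℝ) (x : ℝ) : ℝ :=
  ζ * (x ^ 2 - 1) ^ ((l : ℝ) + 1 / 2) * Real.exp (-ζ * x) / ((2 * (l : ℝ) + 1) * K2 ζ)

/-- An orthonormal family for the weight `ω^{(ℓ)}(·;ζ)`: real polynomials `P k` of degree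
exactly `k`, positive leading coefficients, orthonormal for the weighted inner product. -/
def IsOrthoFam (l : ℕ) (ζ : ℝ) (P : ℕ → Polynomial ℝ) : Prop :=
  (∀ k : ℕ, (P k).degree = k) ∧ (∀ k : ℕ, 0 < (P k).leadingCoeff) ∧
  ∀ i k : ℕ, (∫ x in Set.Ioi (1 : ℝ), (P i).eval x * (P k).eval x * wgt l ζ x)
      = if i = k then 1 else 0

/-- `p_k = c_k^{(ℓ−1)} / c_k^{(ℓ)}` (ratio of leading coefficients); `Q` is the family
for `ℓ−1` and `P` the family for `ℓ`. -/
noncomputable def pC (P Q : ℕ → Polynomial ℝ) (k : ℕ) : ℝ :=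
  (Q k).leadingCoeff / (P k).leadingCoeff

/-- `r_k = ((2ℓ−1)/(2ℓ+1))·c_{k−1}^{(ℓ)}/c_{k+1}^{(ℓ−1)}` for `k ≥ 1`, with `r₀ = 0`. -/
noncomputable def rC (l : ℕ) (P Q : ℕ → Polynomial ℝ) (k : ℕ) : ℝ :=
  if k = 0 then 0
  else ((2 * (l : ℝ) - 1) / (2 * (l : ℝ) + 1)) * (P (k - 1)).leadingCoeff
        / (Q (k + 1)).leadingCoeff

/-- `q_k = ∫ P_{k+1}^{(ℓ−1)}·P_k^{(ℓ)}·ω^{(ℓ)} dx`. -/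
noncomputable def qC (l : ℕ) (ζ : ℝ) (P Q : ℕ → Polynomial ℝ) (k : ℕ) : ℝ :=
  ∫ x in Set.Ioi (1 : ℝ), (Q (k + 1)).eval x * (P k).eval x * wgt l ζ x

lemma K2_nonneg (ζ : ℝ) : 0 ≤ K2 ζ := by
  apply setIntegral_nonneg measurableSet_Ioi
  intro t _
  have h1 : (0:ℝ) < Real.cosh (2*t) := Real.cosh_pos _
  positivity

lemma wgt_continuous (m : ℕ) (ζ : ℝ) : Continuous (wgt m ζ) := by
  unfold wgt
  apply Continuous.div_const
  exact (continuous_const.mul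
    ((Real.continuous_rpow_const (by positivity)).comp
      ((continuous_pow 2).sub continuous_const))).mul
    ((continuous_const.mul continuous_id).rexp)

lemma wgt_nonneg {m : ℕ} {ζ : ℝ} (hζ : 0 < ζ) (hK : 0 ≤ K2 ζ) {x : ℝ} (hx : 1 ≤ x) :
    0 ≤ wgt m ζ x := by
  unfold wgt
  have hx2 : (0:ℝ) ≤ x^2 - 1 := by nlinarith
  apply div_nonneg
  · exact mul_nonneg (mul_nonneg hζ.le (Real.rpow_nonneg hx2 _)) (Real.exp_pos _).le
  · apply mul_nonneg (by positivity) hK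

lemma sq_integrable {m : ℕ} {ζ : ℝ} {R : ℕ → Polynomial ℝ} (hR : IsOrthoFam m ζ R) (k : ℕ) :
    IntegrableOn (fun x => (R k).eval x * (R k).eval x * wgt m ζ x) (Set.Ioi 1) := by
  by_contra h
  have h00 := hR.2.2 k k
  rw [if_pos rfl, MeasureTheory.integral_undef h] at h00
  exact one_ne_zero h00.symm

lemma cross_integrable {m : ℕ} {ζ : ℝ} (hζ : 0 < ζ) {R : ℕ → Polynomial ℝ}
    (hR : IsOrthoFam m ζ R) (i k : ℕ) :
    IntegrableOn (fun x => (R i).eval x * (R k).eval x * wgt m ζ x) (Set.Ioi 1) := by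
  have hK : 0 ≤ K2 ζ := K2_nonneg ζ
  have hg := (sq_integrable hR i).add (sq_integrable hR k)
  apply Integrable.mono' hg
  · exact ((((R i).continuous).mul ((R k).continuous)).measurable.mul
      (wgt_continuous m ζ).measurable).aestronglyMeasurable
  · rw [ae_restrict_iff' measurableSet_Ioi]
    filter_upwards with x hx
    have hw := wgt_nonneg (m := m) hζ hK (le_of_lt hx)
    have habs : ‖(R i).eval x * (R k).eval x * wgt m ζ x‖
        = |(R i).eval x * (R k).eval x| * wgt m ζ x := by
      rw [Real.norm_eq_abs, abs_mul, abs_of_nonneg hw]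
    rw [habs]
    have h2 : |(R i).eval x * (R k).eval x|
        ≤ (R i).eval x * (R i).eval x + (R k).eval x * (R k).eval x := by
      rcases abs_cases ((R i).eval x * (R k).eval x) with ⟨h, _⟩ | ⟨h, _⟩ <;> rw [h] <;>
        nlinarith [sq_nonneg ((R i).eval x - (R k).eval x), sq_nonneg ((R i).eval x + (R k).eval x)]
    calc |(R i).eval x * (R k).eval x| * wgt m ζ x
        ≤ ((R i).eval x * (R i).eval x + (R k).eval x * (R k).eval x) * wgt m ζ x :=
          mul_le_mul_of_nonneg_right h2 hw
      _ = (fun x => (R i).eval x * (R i).eval x * wgt m ζ x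
            + (R k).eval x * (R k).eval x * wgt m ζ x) x := by ring

lemma K2_ne_zero {m : ℕ} {ζ : ℝ} {R : ℕ → Polynomial ℝ} (hR : IsOrthoFam m ζ R) :
    K2 ζ ≠ 0 := by
  intro h
  have h00 := hR.2.2 0 0
  rw [if_pos rfl] at h00
  have hz : ∀ x : ℝ, wgt m ζ x = 0 := by
    intro x; unfold wgt; rw [h, mul_zero, div_zero]
  simp only [hz, mul_zero, integral_zero] at h00
  exact one_ne_zero h00.symm

lemma rep {R : ℕ → Polynomial ℝ} (hdeg : ∀ k, (R k).degree = k)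
    (hlc : ∀ k, (R k).leadingCoeff ≠ 0) :
    ∀ (n : ℕ) (f : Polynomial ℝ), f.degree ≤ (n : WithBot ℕ) →
      ∃ c : ℕ → ℝ, f = ∑ j ∈ Finset.range (n+1), c j • R j ∧
        c n = f.coeff n / (R n).leadingCoeff := by
  intro n
  induction n with
  | zero =>
    intro f hf
    have h0 : R 0 = C ((R 0).coeff 0) := eq_C_of_degree_le_zero (le_of_eq (hdeg 0))
    have hlc0 : (R 0).leadingCoeff = (R 0).coeff 0 := by
      rw [leadingCoeff, natDegree_eq_of_degree_eq_some (hdeg 0)]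
    set b := (R 0).coeff 0 with hb
    refine ⟨fun _ => f.coeff 0 / (R 0).leadingCoeff, ?_, rfl⟩
    rw [Finset.sum_range_one, hlc0, h0, Polynomial.smul_C, smul_eq_mul,
      div_mul_cancel₀ _ (hlc0 ▸ hlc 0)]
    exact eq_C_of_degree_le_zero hf
  | succ n ih =>
    intro f hf
    set a := f.coeff (n+1) / (R (n+1)).leadingCoeff with ha
    have hnd : (R (n+1)).natDegree = n+1 := natDegree_eq_of_degree_eq_some (hdeg (n+1))
    have hlcc : (R (n+1)).coeff (n+1) = (R (n+1)).leadingCoeff := by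
      rw [leadingCoeff, hnd]
    have hg : (f - a • R (n+1)).degree ≤ (n : WithBot ℕ) := by
      rw [degree_le_iff_coeff_zero]
      intro m hm
      have hm' : n + 1 ≤ m := by exact_mod_cast hm
      rcases eq_or_lt_of_le hm' with h | h
      · rw [coeff_sub, coeff_smul, ← h, hlcc, smul_eq_mul, ha,
          div_mul_cancel₀ _ (hlc (n+1)), sub_self]
      · have h1 : f.coeff m = 0 :=
          coeff_eq_zero_of_degree_lt (lt_of_le_of_lt hf (by exact_mod_cast h))
        have h2 : (R (n+1)).coeff m = 0 :=
          coeff_eq_zero_of_degree_lt (by rw [hdeg]; exact_mod_cast h)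
        rw [coeff_sub, coeff_smul, h1, h2, smul_zero, sub_self]
    obtain ⟨c, hc, -⟩ := ih (f - a • R (n+1)) hg
    refine ⟨fun j => if j = n+1 then a else c j, ?_, by simp⟩
    rw [Finset.sum_range_succ]
    simp only [if_pos rfl, if_true]
    have hsum : ∑ j ∈ Finset.range (n+1), (if j = n+1 then a else c j) • R j
        = ∑ j ∈ Finset.range (n+1), c j • R j := by
      refine Finset.sum_congr rfl fun j hj => ?_
      rw [if_neg (Finset.mem_range.mp hj).ne]
    rw [hsum, ← hc]
    abel

lemma integral_rep {m : ℕ} {ζ : ℝ} (hζ : 0 < ζ) {R : ℕ → Polynomial ℝ}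
    (hR : IsOrthoFam m ζ R) (f : Polynomial ℝ) (n : ℕ) (c : ℕ → ℝ)
    (hf : f = ∑ j ∈ Finset.range n, c j • R j) (k : ℕ) :
    (∫ x in Set.Ioi (1:ℝ), f.eval x * (R k).eval x * wgt m ζ x)
      = if k ∈ Finset.range n then c k else 0 := by
  have hptw : ∀ x : ℝ, f.eval x * (R k).eval x * wgt m ζ x
      = ∑ j ∈ Finset.range n, c j * ((R j).eval x * (R k).eval x * wgt m ζ x) := by
    intro x
    conv_lhs => rw [hf]
    rw [eval_finset_sum, Finset.sum_mul, Finset.sum_mul]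
    refine Finset.sum_congr rfl fun j _ => ?_
    simp only [eval_smul, smul_eq_mul]
    ring
  simp only [hptw]
  rw [integral_finset_sum _ (fun j _ => ((cross_integrable hζ hR j k).const_mul (c j)))]
  have hval : ∀ j ∈ Finset.range n,
      (∫ x in Set.Ioi (1:ℝ), c j * ((R j).eval x * (R k).eval x * wgt m ζ x))
        = if j = k then c j else 0 := by
    intro j _
    rw [MeasureTheory.integral_const_mul, hR.2.2 j k]
    simp
  rw [Finset.sum_congr rfl hval, Finset.sum_ite_eq' (Finset.range n) k c]

lemma integral_poly {m : ℕ} {ζ : ℝ} (hζ : 0 < ζ) {R : ℕ → Polynomial ℝ}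
    (hR : IsOrthoFam m ζ R) (f : Polynomial ℝ) (k : ℕ) (hf : f.degree ≤ (k : WithBot ℕ)) :
    (∫ x in Set.Ioi (1:ℝ), f.eval x * (R k).eval x * wgt m ζ x)
      = f.coeff k / (R k).leadingCoeff := by
  obtain ⟨c, hc, hck⟩ := rep hR.1 (fun j => (hR.2.1 j).ne') k f hf
  rw [integral_rep hζ hR f (k+1) c hc k,
    if_pos (Finset.mem_range.mpr (Nat.lt_succ_self k)), hck]

lemma eval_expansion {m : ℕ} {ζ : ℝ} (hζ : 0 < ζ) {R : ℕ → Polynomial ℝ}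
    (hR : IsOrthoFam m ζ R) (f : Polynomial ℝ) (n : ℕ) (hf : f.degree ≤ (n : WithBot ℕ))
    (x : ℝ) :
    f.eval x = ∑ j ∈ Finset.range (n+1),
      (∫ t in Set.Ioi (1:ℝ), f.eval t * (R j).eval t * wgt m ζ t) * (R j).eval x := by
  obtain ⟨c, hc, -⟩ := rep hR.1 (fun j => (hR.2.1 j).ne') n f hf
  have hterm : ∀ j ∈ Finset.range (n+1),
      (∫ t in Set.Ioi (1:ℝ), f.eval t * (R j).eval t * wgt m ζ t) * (R j).eval x
        = c j * (R j).eval x := by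
    intro j hj
    rw [integral_rep hζ hR f (n+1) c hc j, if_pos hj]
  rw [Finset.sum_congr rfl hterm]
  conv_lhs => rw [hc]
  rw [eval_finset_sum]
  exact Finset.sum_congr rfl fun j _ => by simp only [eval_smul, smul_eq_mul]

theorem stmt8 (l : ℕ) (hl : 1 ≤ l) (ζ : ℝ) (hζ : 0 < ζ)
    (P Q : ℕ → Polynomial ℝ)
    (hP : IsOrthoFam l ζ P) (hQ : IsOrthoFam (l - 1) ζ Q) :
    ∀ k : ℕ, ∀ x : ℝ,
      ((2 * (l : ℝ) - 1) / (2 * (l : ℝ) + 1)) * (x ^ 2 - 1) * (P k).eval x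
          = pC P Q k * (Q k).eval x + qC l ζ P Q k * (Q (k + 1)).eval x
              + rC l P Q (k + 1) * (Q (k + 2)).eval x ∧
      (Q (k + 1)).eval x
          = rC l P Q k * (P (k - 1)).eval x + qC l ζ P Q k * (P k).eval x
              + pC P Q (k + 1) * (P (k + 1)).eval x := by
  intro k x
  have hKne : K2 ζ ≠ 0 := K2_ne_zero hP
  have hPdeg := hP.1
  have hQdeg := hQ.1
  have hPlc : ∀ j, (P j).leadingCoeff ≠ 0 := fun j => (hP.2.1 j).ne'
  have hQlc : ∀ j, (Q j).leadingCoeff ≠ 0 := fun j => (hQ.2.1 j).ne'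
  set cst : ℝ := (2*(l:ℝ)-1)/(2*(l:ℝ)+1) with hcst
  have hl1 : (1:ℝ) ≤ (l:ℝ) := by exact_mod_cast hl
  have hl' : ((l-1 : ℕ):ℝ) = (l:ℝ) - 1 := by
    push_cast [Nat.cast_sub hl]; ring
  have hw : ∀ y, y ∈ Set.Ioi (1:ℝ) → cst * (y^2 - 1) * wgt (l-1) ζ y = wgt l ζ y := by
    intro y hy
    have hy1 : (1:ℝ) < y := hy
    have hb : (0:ℝ) < y^2 - 1 := by nlinarith
    unfold wgt
    rw [hl']
    have hr : (y^2-1) ^ ((l:ℝ) + 1/2) = (y^2-1) ^ (((l:ℝ)-1) + 1/2) * (y^2-1) := by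
      rw [show ((l:ℝ)+1/2) = (((l:ℝ)-1)+1/2) + 1 by ring, Real.rpow_add hb, Real.rpow_one]
    rw [hr, hcst]
    have hne1 : (2*((l:ℝ)-1)+1) ≠ 0 := by linarith
    have hne2 : (2*(l:ℝ)+1) ≠ 0 := by linarith
    field_simp
    ring
  set F : ℕ → Polynomial ℝ := fun j => cst • ((X^2 - 1) * P j) with hF
  have hX2 : ((X:Polynomial ℝ)^2 - 1).Monic := by
    have := monic_X_pow_sub_C (1:ℝ) (two_ne_zero); simpa using this
  have hX2nd : ((X:Polynomial ℝ)^2 - 1).natDegree = 2 := by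
    have := natDegree_X_pow_sub_C (n := 2) (r := (1:ℝ)); simpa using this
  have hPne : ∀ j, P j ≠ 0 := fun j => leadingCoeff_ne_zero.mp (hPlc j)
  have hFdeg : ∀ j, (F j).degree ≤ ((j+2 : ℕ) : WithBot ℕ) := by
    intro j
    refine le_trans (degree_smul_le _ _) ?_
    rw [degree_mul, degree_eq_natDegree hX2.ne_zero, hX2nd, hPdeg j]
    exact_mod_cast le_of_eq (by ring)
  have hFcoeff : ∀ j, (F j).coeff (j+2) = cst * (P j).leadingCoeff := by
    intro j
    have hnd : ((X^2 - 1 : Polynomial ℝ) * P j).natDegree = j + 2 := by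
      rw [natDegree_mul hX2.ne_zero (hPne j), hX2nd,
        natDegree_eq_of_degree_eq_some (hPdeg j)]
      omega
    have hco : ((X^2 - 1 : Polynomial ℝ) * P j).coeff (j+2)
        = ((X^2 - 1 : Polynomial ℝ) * P j).leadingCoeff := by
      rw [leadingCoeff, hnd]
    show (cst • ((X^2 - 1) * P j)).coeff (j+2) = cst * (P j).leadingCoeff
    rw [coeff_smul, smul_eq_mul, hco, leadingCoeff_mul, hX2.leadingCoeff, one_mul]
  have hFeval : ∀ j (y : ℝ), (F j).eval y = cst * ((y^2 - 1) * (P j).eval y) := by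
    intro j y
    show (cst • ((X^2 - 1) * P j)).eval y = _
    simp [smul_eq_mul]
  have hJ : ∀ i j : ℕ,
      (∫ y in Set.Ioi (1:ℝ), (Q i).eval y * (P j).eval y * wgt l ζ y)
    = ∫ y in Set.Ioi (1:ℝ), (F j).eval y * (Q i).eval y * wgt (l-1) ζ y := by
    intro i j
    refine setIntegral_congr_fun measurableSet_Ioi fun y hy => ?_
    show (Q i).eval y * (P j).eval y * wgt l ζ y
        = (F j).eval y * (Q i).eval y * wgt (l-1) ζ y
    rw [hFeval, ← hw y hy]
    ring
  have hQcoeff : ∀ j, (Q j).coeff j = (Q j).leadingCoeff := fun j => by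
    rw [leadingCoeff, natDegree_eq_of_degree_eq_some (hQdeg j)]
  have hJdiag : ∀ j, (∫ y in Set.Ioi (1:ℝ), (Q j).eval y * (P j).eval y * wgt l ζ y)
      = pC P Q j := by
    intro j
    rw [integral_poly hζ hP (Q j) j (le_of_eq (hQdeg j)), hQcoeff]
    rfl
  have hJlow : ∀ i j : ℕ, i < j →
      (∫ y in Set.Ioi (1:ℝ), (Q i).eval y * (P j).eval y * wgt l ζ y) = 0 := by
    intro i j hij
    rw [integral_poly hζ hP (Q i) j (by rw [hQdeg i]; exact_mod_cast hij.le),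
      coeff_eq_zero_of_degree_lt (by rw [hQdeg i]; exact_mod_cast hij), zero_div]
  have hFtop : ∀ j, (∫ y in Set.Ioi (1:ℝ), (F j).eval y * (Q (j+2)).eval y * wgt (l-1) ζ y)
      = cst * (P j).leadingCoeff / (Q (j+2)).leadingCoeff := by
    intro j
    rw [integral_poly hζ hQ (F j) (j+2) (hFdeg j), hFcoeff]
  have hFhigh : ∀ i j : ℕ, j + 2 < i →
      (∫ y in Set.Ioi (1:ℝ), (F j).eval y * (Q i).eval y * wgt (l-1) ζ y) = 0 := by
    intro i j hij
    rw [integral_poly hζ hQ (F j) i (le_trans (hFdeg j) (by exact_mod_cast hij.le)),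
      coeff_eq_zero_of_degree_lt (lt_of_le_of_lt (hFdeg j) (by exact_mod_cast hij)), zero_div]
  have hrCval : ∀ k' : ℕ,
      rC l P Q (k'+1) = cst * (P k').leadingCoeff / (Q (k'+2)).leadingCoeff := by
    intro k'
    simp only [rC, Nat.add_sub_cancel, ← hcst]
    rw [if_neg (Nat.succ_ne_zero k')]
  constructor
  · have e1 := eval_expansion hζ hQ (F k) (k+2) (hFdeg k) x
    rw [Finset.sum_range_succ, Finset.sum_range_succ, Finset.sum_range_succ] at e1
    have hzero : ∑ j ∈ Finset.range k,
        (∫ t in Set.Ioi (1:ℝ), (F k).eval t * (Q j).eval t * wgt (l-1) ζ t)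
          * (Q j).eval x = 0 := by
      refine Finset.sum_eq_zero fun j hj => ?_
      rw [← hJ j k, hJlow j k (Finset.mem_range.mp hj), zero_mul]
    have hq : (∫ y in Set.Ioi (1:ℝ), (Q (k+1)).eval y * (P k).eval y * wgt l ζ y)
        = qC l ζ P Q k := rfl
    rw [hzero, zero_add, ← hJ k k, hJdiag, ← hJ (k+1) k, hq, hFtop k, ← hrCval k,
      hFeval] at e1
    rw [mul_assoc]
    exact e1
  · have e2 := eval_expansion hζ hP (Q (k+1)) (k+1) (le_of_eq (hQdeg (k+1))) x
    have hq : (∫ y in Set.Ioi (1:ℝ), (Q (k+1)).eval y * (P k).eval y * wgt l ζ y)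
        = qC l ζ P Q k := rfl
    match k, e2, hq with
    | 0, e2, hq =>
      rw [Finset.sum_range_succ, Finset.sum_range_one] at e2
      rw [hq, hJdiag 1] at e2
      have hr0 : rC l P Q 0 = 0 := by simp [rC]
      rw [hr0, zero_mul]
      simpa using e2
    | (k'+1), e2, hq =>
      rw [Finset.sum_range_succ, Finset.sum_range_succ, Finset.sum_range_succ] at e2
      have hzero : ∑ j ∈ Finset.range k',
          (∫ t in Set.Ioi (1:ℝ), (Q (k'+2)).eval t * (P j).eval t * wgt l ζ t)
            * (P j).eval x = 0 := by
        refine Finset.sum_eq_zero fun j hj => ?_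
        rw [hJ (k'+2) j, hFhigh (k'+2) j (by have := Finset.mem_range.mp hj; omega), zero_mul]
      rw [hzero, zero_add, hJ (k'+2) k', hFtop k', ← hrCval k', hq,
        hJdiag (k'+2)] at e2
      simpa using e2
end

section
/- Fix ℓ ≥ 1 and ζ > 0, and let (P_k^{(ℓ)}) and (P_k^{(ℓ−1)}) be orthonormal families for ω^{(ℓ)}(·;ζ) and ω^{(ℓ−1)}(·;ζ), with positive leading coefficients c_k^{(ℓ)}, c_k^{(ℓ−1)}. Define p_k := c_k^{(ℓ−1)}/c_k^{(ℓ)}, p̃_k := ((2ℓ−1)/(2ℓ+1))·c_k^{(ℓ)}/c_{k+1}^{(ℓ−1)}, r̃_k := p_k·(1 − ((2ℓ+1)/(2ℓ−1))·p̃_k²), and q̃_k := σ(P_{k+1}^{(ℓ−1)}) − σ(P_k^{(ℓ)}), where for a real polynomial P of degree d ≥ 1 with leading coefficient c, σ(P) := −(coefficient of x^{d−1} in P)/c (the sum of the roots of P), and σ(P₀^{(ℓ)}) := 0. Then for every k ≥ 0 and all x ∈ ℝ: ((2ℓ−1)/(2ℓ+1))·(x²−1)·P_k^{(ℓ)}(x)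 = p̃_k·(x + q̃_k)·P_{k+1}^{(ℓ−1)}(x) + r̃_k·P_k^{(ℓ−1)}(x), and P_{k+1}^{(ℓ−1)}(x) = ((2ℓ−1)/(2ℓ+1))·(1/p̃_k)·(x − q̃_k)·P_k^{(ℓ)}(x) − (c_{k−1}^{(ℓ)}·c_{k+1}^{(ℓ−1)})/(c_k^{(ℓ)}·c_k^{(ℓ−1)})·r̃_k·P_{k−1}^{(ℓ)}(x) (with P_{−1}^{(ℓ)} := 0). -/
/-!
On `(1, ∞)` the weights satisfy `ω^{(ℓ)} = ((2ℓ-1)/(2ℓ+1)) (x² - 1) ω^{(ℓ-1)}`, so multiplying by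
`x² - 1` carries inner products for `ω^{(ℓ)}` to inner products for `ω^{(ℓ-1)}`. In each relation,
`p̃_k` and `q̃_k` make the two top coefficients of the difference of both sides cancel, leaving a
polynomial of degree `< n` (`n = k + 1`, resp. `n = k`). Its inner products with the first `n`
orthonormal polynomials vanish for degree reasons, except the last one, which `r̃_k` cancels.
As the first `n` orthonormal polynomials span the polynomials of degree `< n`, the difference
is `0`.
-/

open MeasureTheory Polynomial

/-- `p̃_k = ((2ℓ−1)/(2ℓ+1))·c_k^{(ℓ)}/c_{k+1}^{(ℓ−1)}`. -/
noncomputable def ptC (l : ℕ) (P Q : ℕ → Polynomial ℝ) (k : ℕ) : ℝ :=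
  ((2 * (l : ℝ) - 1) / (2 * (l : ℝ) + 1)) * (P k).leadingCoeff / (Q (k + 1)).leadingCoeff

/-- `σ(P)`: the sum of the roots of `P`, i.e. minus the ratio of the subleading to the
leading coefficient; `σ` of a constant polynomial is `0`. -/
noncomputable def rootSum (P : Polynomial ℝ) : ℝ :=
  if P.natDegree = 0 then 0 else -(P.coeff (P.natDegree - 1)) / P.leadingCoeff

/-- `q̃_k = σ(P_{k+1}^{(ℓ−1)}) − σ(P_k^{(ℓ)})`. -/
noncomputable def qtC (P Q : ℕ → Polynomial ℝ) (k : ℕ) : ℝ :=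
  rootSum (Q (k + 1)) - rootSum (P k)

/-- `r̃_k = p_k·(1 − ((2ℓ+1)/(2ℓ−1))·p̃_k²)`. -/
noncomputable def rtC (l : ℕ) (P Q : ℕ → Polynomial ℝ) (k : ℕ) : ℝ :=
  pC P Q k * (1 - ((2 * (l : ℝ) + 1) / (2 * (l : ℝ) - 1)) * (ptC l P Q k) ^ 2)

open Set

namespace Polynomial

theorem Monic.nextCoeff_mul_of_ne_zero {K : Type*} [Field K] {m q : K[X]} (hm : m.Monic)
    (hq : q ≠ 0) : (m * q).nextCoeff = m.nextCoeff * q.leadingCoeff + q.nextCoeff := by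
  set c := q.leadingCoeff
  have hc : c ≠ 0 := leadingCoeff_ne_zero.2 hq
  have hmonic : (C c⁻¹ * q).Monic := monic_C_mul_of_mul_leadingCoeff_eq_one (inv_mul_cancel₀ hc)
  have hq_eq : q = C c * (C c⁻¹ * q) := by
    rw [← mul_assoc, ← C_mul, mul_inv_cancel₀ hc, C_1, one_mul]
  rw [hq_eq, mul_left_comm, nextCoeff_C_mul, nextCoeff_C_mul, hm.nextCoeff_mul hmonic]
  ring

theorem natDegree_X_sq_sub_one {R : Type*} [Ring R] [Nontrivial R] :
    (X ^ 2 - 1 : R[X]).natDegree = 2 := by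
  compute_degree!

theorem nextCoeff_X_sq_sub_one {R : Type*} [Ring R] [Nontrivial R] :
    (X ^ 2 - 1 : R[X]).nextCoeff = 0 := by
  simp [nextCoeff, natDegree_X_sq_sub_one, coeff_one]

theorem monic_X_sq_sub_one {R : Type*} [Ring R] : (X ^ 2 - 1 : R[X]).Monic := by
  simpa using monic_X_pow_sub_C (1 : R) two_ne_zero

theorem coeff_X_add_C_mul {R : Type*} [Semiring R] (p : R[X]) (a : R) (n : ℕ) :
    ((X + C a) * p).coeff (n + 1) = p.coeff n + a * p.coeff (n + 1) := by
  simp [add_mul, coeff_C_mul]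

theorem coeff_X_sq_sub_one_mul {R : Type*} [Ring R] (p : R[X]) (n : ℕ) :
    ((X ^ 2 - 1) * p).coeff (n + 2) = p.coeff n - p.coeff (n + 2) := by
  simp [sub_mul, coeff_X_pow_mul]

theorem smul_sub_smul_mem_degreeLT {R : Type*} [CommRing R] {p q : R[X]} {a b : R} {n : ℕ}
    (hp : p.natDegree = n + 1) (hq : q.natDegree = n + 1)
    (hlc : a * p.leadingCoeff = b * q.leadingCoeff) (hnext : a * p.nextCoeff = b * q.nextCoeff) :
    a • p - b • q ∈ degreeLT R n := by
  rw [mem_degreeLT, degree_lt_iff_coeff_zero]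
  intro m hm
  rw [coeff_sub, coeff_smul, coeff_smul, smul_eq_mul, smul_eq_mul, sub_eq_zero]
  rcases (show m = n ∨ m = n + 1 ∨ n + 1 < m by omega) with rfl | rfl | hm
  · rwa [nextCoeff_of_natDegree_pos (by omega), nextCoeff_of_natDegree_pos (by omega), hp, hq,
      Nat.add_sub_cancel] at hnext
  · rwa [leadingCoeff, leadingCoeff, hp, hq] at hlc
  · rw [coeff_eq_zero_of_natDegree_lt (by omega), coeff_eq_zero_of_natDegree_lt (by omega),
      mul_zero, mul_zero]

end Polynomial

noncomputable def weightedInner (μ : Measure ℝ) (w : ℝ → ℝ) (p q : ℝ[X]) : ℝ :=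
  ∫ x, p.eval x * q.eval x * w x ∂μ

structure IsOrthonormalPolys (μ : Measure ℝ) (w : ℝ → ℝ) (R : ℕ → ℝ[X]) : Prop where
  degree_eq : ∀ k, (R k).degree = k
  weightedInner_eq : ∀ i k, weightedInner μ w (R i) (R k) = if i = k then 1 else 0

section WeightedInner

variable {μ : Measure ℝ} {w : ℝ → ℝ}

theorem weightedInner_comm (p q : ℝ[X]) : weightedInner μ w p q = weightedInner μ w q p := by
  simp only [weightedInner, mul_comm (p.eval _)]

theorem weightedInner_mul_left (r p q : ℝ[X]) :
    weightedInner μ w (r * p) q = weightedInner μ w p (r * q) := by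
  simp only [weightedInner, eval_mul]
  congr 1 with x
  ring

theorem weightedInner_zero_left (q : ℝ[X]) : weightedInner μ w 0 q = 0 := by
  simp [weightedInner]

theorem weightedInner_smul_left (a : ℝ) (p q : ℝ[X]) :
    weightedInner μ w (a • p) q = a * weightedInner μ w p q := by
  simp only [weightedInner, eval_smul, smul_eq_mul, mul_assoc]
  exact integral_const_mul a _

theorem MeasureTheory.Integrable.mul_mul_of_mul_self {f g : ℝ → ℝ}
    (hf : Integrable (fun x => f x * f x * w x) μ) (hg : Integrable (fun x => g x * g x * w x) μ)
    (hfg : AEStronglyMeasurable (fun x => f x * g x * w x) μ) :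
    Integrable (fun x => f x * g x * w x) μ := by
  refine (hf.abs.add hg.abs).mono' hfg (ae_of_all _ fun x => ?_)
  have h := mul_le_mul_of_nonneg_right (two_mul_le_add_sq |f x| |g x|) (abs_nonneg (w x))
  simp only [Pi.add_apply, Real.norm_eq_abs, abs_mul, abs_mul_abs_self, sq_abs] at h ⊢
  nlinarith [abs_nonneg (f x), abs_nonneg (g x), abs_nonneg (w x)]

end WeightedInner

namespace IsOrthonormalPolys

variable {μ : Measure ℝ} {w : ℝ → ℝ} {R : ℕ → ℝ[X]} (hR : IsOrthonormalPolys μ w R)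
include hR

protected def toSequence : Sequence ℝ := ⟨R, hR.degree_eq⟩

theorem natDegree_eq (k : ℕ) : (R k).natDegree = k := hR.toSequence.natDegree_eq k

theorem coeff_self (k : ℕ) : (R k).coeff k = (R k).leadingCoeff := by
  rw [leadingCoeff, hR.natDegree_eq]

theorem ne_zero (k : ℕ) : R k ≠ 0 := hR.toSequence.ne_zero k

theorem leadingCoeff_ne_zero (k : ℕ) : (R k).leadingCoeff ≠ 0 :=
  Polynomial.leadingCoeff_ne_zero.2 (hR.toSequence.ne_zero k)

-- A non-integrable function has integral `0`, not `1`.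
theorem integrable_mul_self (k : ℕ) : Integrable (fun x => (R k).eval x * (R k).eval x * w x) μ :=
  Integrable.of_integral_ne_zero (by
    simpa [weightedInner] using (hR.weightedInner_eq k k).trans_ne (by simp))

-- `R 0` is a nonzero constant, so `w` is a multiple of the integrable `R 0 * R 0 * w`.
theorem aestronglyMeasurable_weight : AEStronglyMeasurable w μ := by
  obtain ⟨c, hc⟩ : ∃ c, R 0 = C c := ⟨_, eq_C_of_degree_eq_zero (hR.degree_eq 0)⟩
  have hc0 : c ≠ 0 := by simpa [hc] using hR.leadingCoeff_ne_zero 0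
  refine ((hR.integrable_mul_self 0).aestronglyMeasurable.const_mul (c * c)⁻¹).congr
    (ae_of_all _ fun x => ?_)
  simp [hc]
  field_simp

theorem integrable_eval_mul {f : ℝ → ℝ} (hf : ∀ k, Integrable (fun x => (R k).eval x * f x) μ)
    (p : ℝ[X]) : Integrable (fun x => p.eval x * f x) μ := by
  have hp : p ∈ Submodule.span ℝ (range R) :=
    (hR.toSequence.span fun k => (hR.leadingCoeff_ne_zero k).isUnit) ▸ Submodule.mem_top
  induction hp using Submodule.span_induction with
  | mem q hq =>
    obtain ⟨k, rfl⟩ := hq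
    exact hf k
  | zero => simp
  | add q r _ _ hq hr => exact (hq.add hr).congr (ae_of_all _ fun x => by simp [add_mul])
  | smul a q _ hq => exact (hq.const_mul a).congr (ae_of_all _ fun x => by simp [mul_assoc])

theorem integrable (p q : ℝ[X]) : Integrable (fun x => p.eval x * q.eval x * w x) μ := by
  have hmeas (p q : ℝ[X]) : AEStronglyMeasurable (fun x => p.eval x * q.eval x * w x) μ :=
    (p.continuous.mul q.continuous).aestronglyMeasurable.mul hR.aestronglyMeasurable_weight
  have hpair (i k : ℕ) : Integrable (fun x => (R i).eval x * (R k).eval x * w x) μ :=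
    (hR.integrable_mul_self i).mul_mul_of_mul_self (hR.integrable_mul_self k) (hmeas _ _)
  have hleft (k : ℕ) : Integrable (fun x => (R k).eval x * (p.eval x * w x)) μ :=
    (hR.integrable_eval_mul (f := fun x => (R k).eval x * w x)
      (fun i => (hpair i k).congr (ae_of_all _ fun x => by ring)) p).congr
        (ae_of_all _ fun x => by ring)
  exact (hR.integrable_eval_mul hleft q).congr (ae_of_all _ fun x => by ring)

theorem weightedInner_add_left (p q r : ℝ[X]) :
    weightedInner μ w (p + q) r = weightedInner μ w p r + weightedInner μ w q r := by
  simp only [weightedInner, eval_add, add_mul]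
  exact integral_add (hR.integrable p r) (hR.integrable q r)

theorem weightedInner_sub_left (p q r : ℝ[X]) :
    weightedInner μ w (p - q) r = weightedInner μ w p r - weightedInner μ w q r := by
  simp only [weightedInner, eval_sub, sub_mul]
  exact integral_sub (hR.integrable p r) (hR.integrable q r)

theorem eq_sum_weightedInner_smul {n : ℕ} {p : ℝ[X]} (hp : p ∈ degreeLT ℝ n) :
    p = ∑ j ∈ Finset.range n, weightedInner μ w p (R j) • R j := by
  rw [← hR.toSequence.span_degreeLT fun i _ => (hR.leadingCoeff_ne_zero i).isUnit] at hp
  induction hp using Submodule.span_induction with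
  | mem q hq =>
    obtain ⟨i, hi, rfl⟩ := hq
    simp [IsOrthonormalPolys.toSequence, hR.weightedInner_eq, Set.mem_Iio.1 hi]
  | zero => simp [weightedInner_zero_left]
  | add p q _ _ hp hq =>
    simp only [hR.weightedInner_add_left, add_smul, Finset.sum_add_distrib, ← hp, ← hq]
  | smul a p _ hp =>
    simp only [weightedInner_smul_left, mul_smul, ← Finset.smul_sum, ← hp]

theorem eq_zero_of_weightedInner_eq_zero {n : ℕ} {p : ℝ[X]} (hp : p ∈ degreeLT ℝ n)
    (h : ∀ j < n, weightedInner μ w p (R j) = 0) : p = 0 := by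
  rw [hR.eq_sum_weightedInner_smul hp]
  exact Finset.sum_eq_zero fun j hj => by rw [h j (Finset.mem_range.1 hj), zero_smul]

theorem weightedInner_eq_coeff_div {n : ℕ} {p : ℝ[X]} (hp : p.degree ≤ n) :
    weightedInner μ w p (R n) = p.coeff n / (R n).leadingCoeff := by
  have hp' : p ∈ degreeLT ℝ (n + 1) :=
    mem_degreeLT.2 (hp.trans_lt (WithBot.coe_lt_coe.2 n.lt_succ_self))
  have hcoeff := congrArg (coeff · n) (hR.eq_sum_weightedInner_smul hp')
  have hlower : ∀ j ∈ Finset.range n, (weightedInner μ w p (R j) • R j).coeff n = 0 :=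
    fun j hj => by
      rw [coeff_smul, coeff_eq_zero_of_natDegree_lt (by
        rw [hR.natDegree_eq j]; exact Finset.mem_range.1 hj), smul_zero]
  rw [Finset.sum_range_succ, coeff_add, finsetSum_coeff, Finset.sum_eq_zero hlower, zero_add,
    coeff_smul, smul_eq_mul] at hcoeff
  rw [eq_div_iff (hR.leadingCoeff_ne_zero n), hcoeff, leadingCoeff, hR.natDegree_eq n]

end IsOrthonormalPolys

theorem rootSum_eq_neg_nextCoeff_div (p : ℝ[X]) : rootSum p = -p.nextCoeff / p.leadingCoeff := by
  unfold rootSum nextCoeff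
  split_ifs <;> simp

theorem wgt_eq_mul_wgt_sub_one {l : ℕ} (hl : 1 ≤ l) (ζ : ℝ) {x : ℝ} (hx : 1 < x) :
    wgt l ζ x = (2 * (l : ℝ) - 1) / (2 * (l : ℝ) + 1) * (x ^ 2 - 1) * wgt (l - 1) ζ x := by
  have hpos : 0 < x ^ 2 - 1 := by nlinarith
  have hl' : (1 : ℝ) ≤ l := by exact_mod_cast hl
  have hrpow : (x ^ 2 - 1) ^ ((l : ℝ) + 1 / 2)
      = (x ^ 2 - 1) * (x ^ 2 - 1) ^ ((l : ℝ) - 1 + 1 / 2) := by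
    rw [← Real.rpow_one_add' hpos.le (by linarith)]
    ring_nf
  unfold wgt
  rw [Nat.cast_sub hl, Nat.cast_one, hrpow, show 2 * ((l : ℝ) - 1) + 1 = 2 * l - 1 by ring]
  rcases eq_or_ne (K2 ζ) 0 with hK | hK
  · simp [hK]
  · field_simp
    exact (mul_div_cancel_right₀ ζ (by linarith)).symm

theorem weightedInner_wgt_eq {l : ℕ} (hl : 1 ≤ l) (ζ : ℝ) (p q : ℝ[X]) :
    weightedInner (volume.restrict (Ioi 1)) (wgt l ζ) p q
      = (2 * (l : ℝ) - 1) / (2 * (l : ℝ) + 1)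
        * weightedInner (volume.restrict (Ioi 1)) (wgt (l - 1) ζ) ((X ^ 2 - 1) * p) q := by
  unfold weightedInner
  rw [← integral_const_mul]
  refine setIntegral_congr_fun measurableSet_Ioi fun x hx => ?_
  simp only [eval_mul, eval_sub, eval_pow, eval_X, eval_one, wgt_eq_mul_wgt_sub_one hl ζ hx]
  ring

theorem IsOrthoFam.isOrthonormalPolys {l : ℕ} {ζ : ℝ} {P : ℕ → ℝ[X]} (hP : IsOrthoFam l ζ P) :
    IsOrthonormalPolys (volume.restrict (Ioi 1)) (wgt l ζ) P :=
  ⟨hP.1, hP.2.2⟩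

theorem two_mul_natCast_sub_one_ne_zero (l : ℕ) : 2 * (l : ℝ) - 1 ≠ 0 := by
  intro h
  have h' : ((2 * l : ℕ) : ℝ) = 1 := by push_cast; linarith
  norm_cast at h'
  omega

namespace IsOrthoFam

variable {l : ℕ} {ζ : ℝ} {P Q : ℕ → ℝ[X]}

theorem smul_X_sq_sub_one_mul_sub_mem_degreeLT (hP : IsOrthoFam l ζ P) (hQ : IsOrthoFam (l - 1) ζ Q)
    (k : ℕ) :
    ((2 * (l : ℝ) - 1) / (2 * (l : ℝ) + 1)) • ((X ^ 2 - 1) * P k)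
      - ptC l P Q k • ((X + C (qtC P Q k)) * Q (k + 1)) ∈ degreeLT ℝ (k + 1) := by
  have hP' := hP.isOrthonormalPolys
  have hQ' := hQ.isOrthonormalPolys
  have hPk := hP'.leadingCoeff_ne_zero k
  have hQk1 := hQ'.leadingCoeff_ne_zero (k + 1)
  refine smul_sub_smul_mem_degreeLT ?_ ?_ ?_ ?_
  · rw [monic_X_sq_sub_one.natDegree_mul' (hP'.ne_zero k), natDegree_X_sq_sub_one,
      hP'.natDegree_eq, add_comm]
  · rw [(monic_X_add_C _).natDegree_mul' (hQ'.ne_zero _), natDegree_X_add_C, hQ'.natDegree_eq,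
      add_comm]
  · rw [leadingCoeff_monic_mul monic_X_sq_sub_one, leadingCoeff_monic_mul (monic_X_add_C _), ptC]
    field_simp
  · rw [monic_X_sq_sub_one.nextCoeff_mul_of_ne_zero (hP'.ne_zero k),
      (monic_X_add_C _).nextCoeff_mul_of_ne_zero (hQ'.ne_zero _), nextCoeff_X_sq_sub_one,
      nextCoeff_X_add_C, ptC, qtC, rootSum_eq_neg_nextCoeff_div, rootSum_eq_neg_nextCoeff_div]
    field_simp
    ring

theorem sub_smul_X_sub_C_mul_mem_degreeLT (hP : IsOrthoFam l ζ P) (hQ : IsOrthoFam (l - 1) ζ Q) (k : ℕ) :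
    Q (k + 1) - ((2 * (l : ℝ) - 1) / (2 * (l : ℝ) + 1) / ptC l P Q k) • ((X - C (qtC P Q k)) * P k)
      ∈ degreeLT ℝ k := by
  have hP' := hP.isOrthonormalPolys
  have hQ' := hQ.isOrthonormalPolys
  have h2l := two_mul_natCast_sub_one_ne_zero l
  have hPk := hP'.leadingCoeff_ne_zero k
  have hQk1 := hQ'.leadingCoeff_ne_zero (k + 1)
  rw [← one_smul ℝ (Q (k + 1))]
  refine smul_sub_smul_mem_degreeLT (hQ'.natDegree_eq _) ?_ ?_ ?_
  · rw [(monic_X_sub_C _).natDegree_mul' (hP'.ne_zero _), natDegree_X_sub_C, hP'.natDegree_eq,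
      add_comm]
  · rw [leadingCoeff_monic_mul (monic_X_sub_C _), ptC]
    field_simp
  · rw [(monic_X_sub_C _).nextCoeff_mul_of_ne_zero (hP'.ne_zero _), nextCoeff_X_sub_C, ptC, qtC,
      rootSum_eq_neg_nextCoeff_div, rootSum_eq_neg_nextCoeff_div]
    field_simp
    ring

theorem smul_X_sq_sub_one_mul_eq (hl : 1 ≤ l) (hP : IsOrthoFam l ζ P)
    (hQ : IsOrthoFam (l - 1) ζ Q) (k : ℕ) :
    ((2 * (l : ℝ) - 1) / (2 * (l : ℝ) + 1)) • ((X ^ 2 - 1) * P k)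
      = ptC l P Q k • ((X + C (qtC P Q k)) * Q (k + 1)) + rtC l P Q k • Q k := by
  have hP' := hP.isOrthonormalPolys
  have hQ' := hQ.isOrthonormalPolys
  rw [← sub_eq_zero, ← sub_sub]
  refine hQ'.eq_zero_of_weightedInner_eq_zero (n := k + 1) (Submodule.sub_mem _
    (hP.smul_X_sq_sub_one_mul_sub_mem_degreeLT hQ k) (Submodule.smul_mem _ _ (mem_degreeLT.2 (by
      rw [hQ'.degree_eq]; exact_mod_cast k.lt_succ_self)))) fun j hj => ?_
  have hjk : j ≤ k := Nat.lt_succ_iff.1 hj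
  rw [hQ'.weightedInner_sub_left, hQ'.weightedInner_sub_left, weightedInner_smul_left,
    weightedInner_smul_left, weightedInner_smul_left, ← weightedInner_wgt_eq hl,
    weightedInner_comm (P k), hP'.weightedInner_eq_coeff_div
      ((hQ'.degree_eq j).trans_le (by exact_mod_cast hjk)),
    weightedInner_mul_left, weightedInner_comm, hQ'.weightedInner_eq_coeff_div
      (degree_le_of_natDegree_le ((natDegree_mul_le_of_le (natDegree_X_add_C _).le
        (hQ'.natDegree_eq j).le).trans (by omega))),
    hQ'.weightedInner_eq, coeff_X_add_C_mul,
    coeff_eq_zero_of_natDegree_lt (by rw [hQ'.natDegree_eq]; omega : (Q j).natDegree < k + 1)]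
  rcases hjk.lt_or_eq with hjk | rfl
  · rw [coeff_eq_zero_of_natDegree_lt (by rw [hQ'.natDegree_eq]; omega), if_neg (by omega)]
    ring
  · rw [if_pos rfl, hQ'.coeff_self, rtC, pC, ptC]
    field_simp
    ring

theorem eq_smul_X_sub_C_mul_sub_smul (hl : 1 ≤ l) (hP : IsOrthoFam l ζ P)
    (hQ : IsOrthoFam (l - 1) ζ Q) (k : ℕ) :
    Q (k + 1)
      = ((2 * (l : ℝ) - 1) / (2 * (l : ℝ) + 1) / ptC l P Q k) • ((X - C (qtC P Q k)) * P k)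
        - (if k = 0 then 0 else (P (k - 1)).leadingCoeff * (Q (k + 1)).leadingCoeff
            / ((P k).leadingCoeff * (Q k).leadingCoeff) * rtC l P Q k) • P (k - 1) := by
  have hP' := hP.isOrthonormalPolys
  have hQ' := hQ.isOrthonormalPolys
  rw [← sub_eq_zero, sub_sub_eq_add_sub, add_sub_right_comm]
  refine hP'.eq_zero_of_weightedInner_eq_zero (n := k)
    (Submodule.add_mem _ (hP.sub_smul_X_sub_C_mul_mem_degreeLT hQ k) ?_) fun j hj => ?_
  · split_ifs with hk
    · rw [zero_smul]
      exact Submodule.zero_mem _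
    · exact Submodule.smul_mem _ _ (mem_degreeLT.2 (by
        rw [hP'.degree_eq]; exact_mod_cast (by omega : k - 1 < k)))
  obtain ⟨m, rfl⟩ : ∃ m, k = m + 1 := ⟨k - 1, by omega⟩
  have hjm : j ≤ m := Nat.lt_succ_iff.1 hj
  rw [if_neg m.add_one_ne_zero, Nat.add_sub_cancel, hP'.weightedInner_add_left,
    hP'.weightedInner_sub_left, weightedInner_smul_left, weightedInner_smul_left,
    weightedInner_comm (Q _), weightedInner_wgt_eq hl ζ (P j),
    hQ'.weightedInner_eq_coeff_div (n := m + 2)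
      (degree_le_of_natDegree_le ((natDegree_mul_le_of_le natDegree_X_sq_sub_one.le
        (hP'.natDegree_eq j).le).trans (by omega))),
    weightedInner_mul_left, weightedInner_comm (P _), hP'.weightedInner_eq_coeff_div (n := m + 1)
      (degree_le_of_natDegree_le ((natDegree_mul_le_of_le (natDegree_X_sub_C _).le
        (hP'.natDegree_eq j).le).trans (by omega))),
    hP'.weightedInner_eq, coeff_X_sq_sub_one_mul, coeff_X_sub_C_mul,
    coeff_eq_zero_of_natDegree_lt (by rw [hP'.natDegree_eq]; omega : (P j).natDegree < m + 2),
    coeff_eq_zero_of_natDegree_lt (by rw [hP'.natDegree_eq]; omega : (P j).natDegree < m + 1)]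
  rcases hjm.lt_or_eq with hjm | rfl
  · rw [coeff_eq_zero_of_natDegree_lt (by rw [hP'.natDegree_eq]; omega), if_neg (by omega)]
    ring
  · have h2l := two_mul_natCast_sub_one_ne_zero l
    have hPk := hP'.leadingCoeff_ne_zero (j + 1)
    have hQk := hQ'.leadingCoeff_ne_zero (j + 1)
    have hQk1 := hQ'.leadingCoeff_ne_zero (j + 2)
    rw [if_pos rfl, hP'.coeff_self, rtC, pC, ptC]
    field_simp
    ring

end IsOrthoFam

theorem stmt9_general (l : ℕ) (hl : 1 ≤ l) (ζ : ℝ)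
    (P Q : ℕ → Polynomial ℝ)
    (hP : IsOrthoFam l ζ P) (hQ : IsOrthoFam (l - 1) ζ Q) :
    ∀ k : ℕ, ∀ x : ℝ,
      ((2 * (l : ℝ) - 1) / (2 * (l : ℝ) + 1)) * (x ^ 2 - 1) * (P k).eval x
          = ptC l P Q k * (x + qtC P Q k) * (Q (k + 1)).eval x
              + rtC l P Q k * (Q k).eval x ∧
      (Q (k + 1)).eval x
          = ((2 * (l : ℝ) - 1) / (2 * (l : ℝ) + 1)) * (1 / ptC l P Q k) * (x - qtC P Q k)
                * (P k).eval x
            - (if k = 0 then 0 else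
                ((P (k - 1)).leadingCoeff * (Q (k + 1)).leadingCoeff)
                  / ((P k).leadingCoeff * (Q k).leadingCoeff)
                  * rtC l P Q k * (P (k - 1)).eval x) := by
  intro k x
  have h1 := congrArg (eval x) (hP.smul_X_sq_sub_one_mul_eq hl hQ k)
  have h2 := congrArg (eval x) (hP.eq_smul_X_sub_C_mul_sub_smul hl hQ k)
  simp only [eval_smul, eval_add, eval_sub, eval_mul, eval_pow, eval_X, eval_C, eval_one,
    smul_eq_mul] at h1 h2
  refine ⟨by linear_combination h1, ?_⟩
  split_ifs at h2 ⊢ <;> linear_combination h2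

theorem stmt9 (l : ℕ) (hl : 1 ≤ l) (ζ : ℝ) (hζ : 0 < ζ)
    (P Q : ℕ → Polynomial ℝ)
    (hP : IsOrthoFam l ζ P) (hQ : IsOrthoFam (l - 1) ζ Q) :
    ∀ k : ℕ, ∀ x : ℝ,
      ((2 * (l : ℝ) - 1) / (2 * (l : ℝ) + 1)) * (x ^ 2 - 1) * (P k).eval x
          = ptC l P Q k * (x + qtC P Q k) * (Q (k + 1)).eval x
              + rtC l P Q k * (Q k).eval x ∧
      (Q (k + 1)).eval x
          = ((2 * (l : ℝ) - 1) / (2 * (l : ℝ) + 1)) * (1 / ptC l P Q k) * (x - qtC P Q k)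
                * (P k).eval x
            - (if k = 0 then 0 else
                ((P (k - 1)).leadingCoeff * (Q (k + 1)).leadingCoeff)
                  / ((P k).leadingCoeff * (Q k).leadingCoeff)
                  * rtC l P Q k * (P (k - 1)).eval x) :=
  stmt9_general l hl ζ P Q hP hQ
end

section
/- Fix ℓ ≥ 1 and ζ > 0, and let (P_k^{(ℓ)}) and (P_k^{(ℓ−1)}) be orthonormal families for ω^{(ℓ)}(·;ζ) and ω^{(ℓ−1)}(·;ζ), with positive leading coefficients c_k^{(ℓ)}, c_k^{(ℓ−1)}. Set p_k := c_k^{(ℓ−1)}/c_k^{(ℓ)}, p̃_k := ((2ℓ−1)/(2ℓ+1))·c_k^{(ℓ)}/c_{k+1}^{(ℓ−1)}, and r_k := ((2ℓ−1)/(2ℓ+1))·c_{k−1}^{(ℓ)}/c_{k+1}^{(ℓ−1)} for k ≥ 1 (r₀ := 0). Then for every k ≥ 0 and all x ∈ ℝ: (a) (d/dx) P_{k+1}^{(ℓ−1)}(x) = ((2ℓ−1)/(2ℓ+1))·((k+1)/p̃_k)·P_k^{(ℓ)}(x) + ζ·r_k·P_{k−1}^{(ℓ)}(x); (b) ((2ℓ−1)/(2ℓ+1))·(x²−1)·(d/dx)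 P_k^{(ℓ)}(x) + (2ℓ−1)·x·P_k^{(ℓ)}(x) = (k+2ℓ+1)·p̃_k·P_{k+1}^{(ℓ−1)}(x) + ζ·p_k·P_k^{(ℓ−1)}(x) (with the convention P_{−1}^{(ℓ)} := 0). -/
open MeasureTheory Polynomial

/-!
Integrating by parts against `ω^{(ℓ)}` (the boundary terms vanish at `1` and at `∞`) and using
`ω^{(ℓ)} = ((2ℓ−1)/(2ℓ+1))·(x²−1)·ω^{(ℓ−1)}` gives the adjointness relation
`⟨R p, q⟩_{ℓ−1} = ζ·⟨p, q⟩_ℓ − ⟨p, q'⟩_ℓ`, where `R = raisingOp ℓ` is the operator on the left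
of (b). Since `R` raises degrees by one and `d/dx` lowers them by one, `R P_k` is a combination of
`P_{k+1}^{(ℓ−1)}, …, P_0^{(ℓ−1)}` and `(P_{k+1}^{(ℓ−1)})'` one of `P_k, …, P_0`; the adjointness
relation and orthogonality kill all but two coefficients, and the top coefficients are ratios
of leading coefficients.
-/

open Polynomial

structure IsOrthonormalSeq {K : Type*} [Field K] (φ : K[X] →ₗ[K] K) (F : ℕ → K[X]) : Prop where
  degree_eq : ∀ k, (F k).degree = k
  apply_mul : ∀ i k, φ (F i * F k) = if i = k then 1 else 0

namespace IsOrthonormalSeq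

variable {K : Type*} [Field K] {φ : K[X] →ₗ[K] K} {F : ℕ → K[X]}

theorem natDegree_eq (h : IsOrthonormalSeq φ F) (k : ℕ) : (F k).natDegree = k :=
  natDegree_eq_of_degree_eq_some (h.degree_eq k)

theorem ne_zero (h : IsOrthonormalSeq φ F) (k : ℕ) : F k ≠ 0 :=
  ne_zero_of_degree_gt ((WithBot.bot_lt_coe k).trans_eq (h.degree_eq k).symm)

theorem leadingCoeff_ne_zero (h : IsOrthonormalSeq φ F) (k : ℕ) : (F k).leadingCoeff ≠ 0 :=
  Polynomial.leadingCoeff_ne_zero.2 (h.ne_zero k)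

theorem coeff_self (h : IsOrthonormalSeq φ F) (k : ℕ) : (F k).coeff k = (F k).leadingCoeff := by
  rw [leadingCoeff, h.natDegree_eq]

theorem coeff_of_le (h : IsOrthonormalSeq φ F) {j n : ℕ} (hjn : j ≤ n) :
    (F j).coeff n = if j = n then (F j).leadingCoeff else 0 := by
  split_ifs with hj
  · rw [← hj, h.coeff_self]
  · exact coeff_eq_zero_of_natDegree_lt (by rw [h.natDegree_eq]; omega)

theorem degree_sub_C_mul_lt (h : IsOrthonormalSeq φ F) {f : K[X]} {n : ℕ}
    (hf : f.degree ≤ n) : (f - C (f.coeff n / (F n).leadingCoeff) * F n).degree < n := by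
  rw [degree_lt_iff_coeff_zero]
  intro m hm
  rcases hm.eq_or_lt with rfl | hm
  · rw [coeff_sub, coeff_C_mul, h.coeff_self, div_mul_cancel₀ _ (h.leadingCoeff_ne_zero n),
      sub_self]
  · rw [coeff_sub, coeff_C_mul, coeff_eq_zero_of_degree_lt (hf.trans_lt (by exact_mod_cast hm)),
      coeff_eq_zero_of_degree_lt ((h.degree_eq n).trans_lt (by exact_mod_cast hm)), mul_zero,
      sub_zero]

theorem apply_mul_eq_zero (h : IsOrthonormalSeq φ F) {f : K[X]} {j : ℕ}
    (hf : f.degree < j) : φ (f * F j) = 0 := by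
  suffices ∀ n ≤ j, ∀ f : K[X], f.degree < n → φ (f * F j) = 0 from this j le_rfl f hf
  intro n
  induction n with
  | zero =>
    intro _ f hf
    rw [degree_lt_iff_coeff_zero] at hf
    rw [show f = 0 from Polynomial.ext fun m => by simpa using hf m m.zero_le, zero_mul, map_zero]
  | succ n ih =>
    intro hnj f hf
    have hf' : f.degree ≤ n := by
      rw [degree_lt_iff_coeff_zero] at hf
      exact (degree_le_iff_coeff_zero f n).2 fun m hm => hf m (WithBot.coe_lt_coe.1 hm)
    rw [← sub_add_cancel f (C (f.coeff n / (F n).leadingCoeff) * F n), add_mul, map_add,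
      ih (by omega) _ (h.degree_sub_C_mul_lt hf'), mul_assoc, C_mul', map_smul, h.apply_mul,
      if_neg (by omega), smul_zero, zero_add]

theorem apply_mul_eq_coeff_div (h : IsOrthonormalSeq φ F) {f : K[X]} {j : ℕ}
    (hf : f.degree ≤ j) : φ (f * F j) = f.coeff j / (F j).leadingCoeff := by
  conv_lhs => rw [← sub_add_cancel f (C (f.coeff j / (F j).leadingCoeff) * F j), add_mul, map_add,
    h.apply_mul_eq_zero (h.degree_sub_C_mul_lt hf), mul_assoc, C_mul', map_smul, h.apply_mul,
    if_pos rfl, smul_eq_mul, mul_one, zero_add]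

theorem eq_of_forall_apply_mul_eq (h : IsOrthonormalSeq φ F) {f g : K[X]} {n : ℕ}
    (hf : f.degree ≤ n) (hg : g.degree ≤ n) (hfg : ∀ j ≤ n, φ (f * F j) = φ (g * F j)) :
    f = g := by
  by_contra hne
  have hd : (f - g).natDegree ≤ n :=
    natDegree_le_iff_degree_le.2 ((degree_sub_le f g).trans (max_le hf hg))
  have := h.apply_mul_eq_coeff_div (f := f - g) (j := (f - g).natDegree) degree_le_natDegree
  rw [sub_mul, map_sub, hfg _ hd, sub_self, ← leadingCoeff] at this
  exact div_ne_zero (Polynomial.leadingCoeff_ne_zero.2 (sub_ne_zero.2 hne))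
    (h.leadingCoeff_ne_zero _) this.symm

theorem apply_C_mul_add_C_mul_mul (h : IsOrthonormalSeq φ F) (a b : K) (m n j : ℕ) :
    φ ((C a * F m + C b * F n) * F j) = (if m = j then a else 0) + (if n = j then b else 0) := by
  simp only [add_mul, C_mul', smul_mul_assoc, map_add, map_smul, h.apply_mul, smul_eq_mul, mul_ite,
    mul_one, mul_zero]

theorem degree_C_mul_add_C_mul_le (h : IsOrthonormalSeq φ F) (a b : K) {m n N : ℕ} (hm : m ≤ N)
    (hn : n ≤ N) :
    (C a * F m + C b * F n).degree ≤ N :=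
  natDegree_le_iff_degree_le.1 <| natDegree_add_le_of_degree_le
    ((natDegree_C_mul_le _ _).trans ((h.natDegree_eq m).trans_le hm))
    ((natDegree_C_mul_le _ _).trans ((h.natDegree_eq n).trans_le hn))

end IsOrthonormalSeq

section XSqSubOne

variable {R : Type*} [CommRing R]

theorem coeff_X_sq_sub_one_mul_add_two (p : R[X]) (n : ℕ) :
    ((X ^ 2 - 1) * p).coeff (n + 2) = p.coeff n - p.coeff (n + 2) := by
  rw [sub_mul, one_mul, coeff_sub, coeff_X_pow_mul]

theorem natDegree_X_sq_sub_one_mul_derivative_le (p : R[X]) :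
    ((X ^ 2 - 1) * derivative p).natDegree ≤ p.natDegree + 1 := by
  by_cases hp : p.natDegree = 0
  · simp [derivative_of_natDegree_zero hp]
  · have h₁ : (X ^ 2 - 1 : R[X]).natDegree ≤ 2 := by compute_degree
    have h₂ := natDegree_derivative_lt hp
    exact natDegree_mul_le.trans (by omega)

theorem coeff_X_sq_sub_one_mul_derivative {p : R[X]} {n : ℕ} (hp : p.natDegree ≤ n) :
    ((X ^ 2 - 1) * derivative p).coeff (n + 1) = n * p.coeff n := by
  cases n with
  | zero =>
    simp [derivative_of_natDegree_zero (Nat.le_zero.1 hp)]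
  | succ n =>
    rw [coeff_X_sq_sub_one_mul_add_two, coeff_derivative, coeff_derivative,
      coeff_eq_zero_of_natDegree_lt (n := n + 2 + 1) (by omega)]
    push_cast
    ring

end XSqSubOne

open Real Set Filter Topology Asymptotics

section Weight

variable {l : ℕ} {ζ : ℝ}

theorem wgt_eq_div_mul (l : ℕ) (ζ x : ℝ) :
    wgt l ζ x = ζ / K2 ζ * ((x ^ 2 - 1) ^ ((l : ℝ) + 1 / 2) * exp (-ζ * x) / (2 * l + 1)) := by
  rw [wgt]; field_simp

theorem continuous_wgt (l : ℕ) (ζ : ℝ) : Continuous (wgt l ζ) := by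
  have hrpow : Continuous fun x : ℝ => (x ^ 2 - 1) ^ ((l : ℝ) + 1 / 2) :=
    continuous_iff_continuousAt.2 fun x =>
      (continuousAt_rpow_const _ _ (Or.inr (by positivity))).comp (by fun_prop)
  unfold wgt
  fun_prop

theorem wgt_one (l : ℕ) (ζ : ℝ) : wgt l ζ 1 = 0 := by
  rw [wgt, one_pow, sub_self, zero_rpow (by positivity), mul_zero, zero_mul, zero_div]

theorem sq_sub_one_rpow_le_pow {x : ℝ} (hx : 1 ≤ x) :
    (x ^ 2 - 1) ^ ((l : ℝ) + 1 / 2) ≤ x ^ (2 * l + 1) := by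
  calc (x ^ 2 - 1) ^ ((l : ℝ) + 1 / 2) ≤ (x ^ 2) ^ ((l : ℝ) + 1 / 2) :=
        rpow_le_rpow (by nlinarith) (by linarith) (by positivity)
    _ = x ^ (2 * l + 1) := by
        rw [← rpow_natCast x 2, ← rpow_mul (by linarith), ← rpow_natCast]
        push_cast; ring_nf

theorem isBigO_eval_mul_wgt (l : ℕ) (hζ : 0 < ζ) (p : ℝ[X]) :
    (fun x => p.eval x * wgt l ζ x) =O[atTop] fun x => exp (-(ζ / 2) * x) := by
  have hp : (fun x => p.eval x) =O[atTop] fun x => x ^ p.natDegree := by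
    simpa using isBigO_atTop_of_degree_le p (X ^ p.natDegree) (by simp [degree_le_natDegree])
  have hw : wgt l ζ =O[atTop] fun x => x ^ (2 * l + 1) * exp (-ζ * x) := by
    refine IsBigO.of_bound |ζ / ((2 * l + 1) * K2 ζ)| ?_
    filter_upwards [eventually_ge_atTop 1] with x hx
    have h0 : 0 ≤ (x ^ 2 - 1) ^ ((l : ℝ) + 1 / 2) := rpow_nonneg (by nlinarith) _
    rw [show wgt l ζ x = ζ / ((2 * l + 1) * K2 ζ) * ((x ^ 2 - 1) ^ ((l : ℝ) + 1 / 2) *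
      exp (-ζ * x)) by rw [wgt]; ring]
    simp only [norm_mul, Real.norm_eq_abs, abs_of_nonneg h0, abs_of_nonneg (pow_nonneg
      (by linarith : (0 : ℝ) ≤ x) _)]
    gcongr
    exact sq_sub_one_rpow_le_pow hx
  have hexp : (fun x => x ^ (p.natDegree + (2 * l + 1)) * exp (-ζ * x)) =O[atTop]
      fun x => exp (-(ζ / 2) * x) :=
    ((isLittleO_pow_exp_pos_mul_atTop _ (half_pos hζ)).isBigO.mul
      (isBigO_refl (fun x => exp (-ζ * x)) atTop)).congr_right
      fun x => by rw [← exp_add]; ring_nf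
  refine ((hp.mul hw).congr_left fun x => ?_).trans (hexp.congr_left fun x => ?_)
  · rfl
  · ring

theorem tendsto_eval_mul_wgt (l : ℕ) (hζ : 0 < ζ) (p : ℝ[X]) :
    Tendsto (fun x => p.eval x * wgt l ζ x) atTop (𝓝 0) :=
  (isBigO_eval_mul_wgt l hζ p).trans_tendsto <|
    tendsto_exp_atBot.comp <| tendsto_id.const_mul_atTop_of_neg (by linarith)

theorem integrableOn_eval_mul_wgt (l : ℕ) (hζ : 0 < ζ) (p : ℝ[X]) :
    IntegrableOn (fun x => p.eval x * wgt l ζ x) (Ioi 1) :=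
  integrable_of_isBigO_exp_neg (half_pos hζ)
    ((p.continuous.mul (continuous_wgt l ζ)).continuousOn) (isBigO_eval_mul_wgt l hζ p)

theorem hasDerivAt_wgt (hl : 1 ≤ l) {x : ℝ} (hx : 1 < x) :
    HasDerivAt (wgt l ζ) ((2 * l - 1) * x * wgt (l - 1) ζ x - ζ * wgt l ζ x) x := by
  obtain ⟨m, rfl⟩ : ∃ m, l = m + 1 := ⟨l - 1, by omega⟩
  have hx2 : 0 < x ^ 2 - 1 := by nlinarith
  have hrpow := ((hasDerivAt_pow 2 x).sub_const 1).rpow_const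
    (p := ((m + 1 : ℕ) : ℝ) + 1 / 2) (Or.inl hx2.ne')
  have hexp := ((hasDerivAt_id x).const_mul (-ζ)).exp
  have := ((hrpow.mul hexp).div_const (2 * ((m + 1 : ℕ) : ℝ) + 1)).const_mul (ζ / K2 ζ)
  refine (this.congr_of_eventuallyEq (.of_forall fun y => wgt_eq_div_mul _ _ y)).congr_deriv ?_
  rw [wgt_eq_div_mul, wgt_eq_div_mul, Nat.add_sub_cancel]
  set c := ζ / K2 ζ
  push_cast [id]
  rw [show (m : ℝ) + 1 + 1 / 2 - 1 = m + 1 / 2 by ring]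
  field_simp
  ring

theorem wgt_eq_div_mul_wgt_pred (hl : 1 ≤ l) {x : ℝ} (hx : 1 < x) :
    wgt l ζ x = (2 * l - 1) / (2 * l + 1) * ((x ^ 2 - 1) * wgt (l - 1) ζ x) := by
  obtain ⟨m, rfl⟩ : ∃ m, l = m + 1 := ⟨l - 1, by omega⟩
  have hx2 : 0 < x ^ 2 - 1 := by nlinarith
  rw [wgt_eq_div_mul, wgt_eq_div_mul, Nat.add_sub_cancel]
  set c := ζ / K2 ζ
  push_cast
  rw [show (m : ℝ) + 1 + 1 / 2 = 1 + (m + 1 / 2) by ring, rpow_add hx2, rpow_one]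
  field_simp
  ring

end Weight

section WeightedIntegral

variable {l : ℕ} {ζ : ℝ}

noncomputable def wgtIntegral (l : ℕ) (hζ : 0 < ζ) : ℝ[X] →ₗ[ℝ] ℝ where
  toFun p := ∫ x in Ioi 1, p.eval x * wgt l ζ x
  map_add' p q := by
    simp only [eval_add, add_mul]
    exact integral_add (integrableOn_eval_mul_wgt l hζ p) (integrableOn_eval_mul_wgt l hζ q)
  map_smul' a p := by
    simp only [eval_smul, smul_eq_mul, mul_assoc, RingHom.id_apply]
    exact integral_const_mul a _

theorem wgtIntegral_apply (hζ : 0 < ζ) (p : ℝ[X]) :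
    wgtIntegral l hζ p = ∫ x in Ioi 1, p.eval x * wgt l ζ x :=
  rfl

theorem IsOrthoFam.isOrthonormalSeq (hζ : 0 < ζ) {P : ℕ → ℝ[X]} (hP : IsOrthoFam l ζ P) :
    IsOrthonormalSeq (wgtIntegral l hζ) P :=
  ⟨hP.1, fun i k => by simpa only [wgtIntegral_apply, eval_mul] using hP.2.2 i k⟩

theorem wgtIntegral_pred_C_mul_X_sq_sub_one_mul (hl : 1 ≤ l) (hζ : 0 < ζ) (p : ℝ[X]) :
    wgtIntegral (l - 1) hζ (C ((2 * (l : ℝ) - 1) / (2 * l + 1)) * ((X ^ 2 - 1) * p)) =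
      wgtIntegral l hζ p := by
  simp only [wgtIntegral_apply]
  refine setIntegral_congr_fun measurableSet_Ioi fun x hx => ?_
  simp only [eval_mul, eval_C, eval_sub, eval_pow, eval_X, eval_one, wgt_eq_div_mul_wgt_pred hl hx]
  ring

theorem wgtIntegral_derivative (hl : 1 ≤ l) (hζ : 0 < ζ) (p : ℝ[X]) :
    wgtIntegral l hζ (derivative p) =
      ζ * wgtIntegral l hζ p - (2 * l - 1) * wgtIntegral (l - 1) hζ (X * p) := by
  have hderiv : ∀ x ∈ Ioi (1 : ℝ), HasDerivAt (fun y => p.eval y * wgt l ζ y)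
      ((derivative p).eval x * wgt l ζ x + (2 * l - 1) * ((X * p).eval x * wgt (l - 1) ζ x) -
        ζ * (p.eval x * wgt l ζ x)) x := fun x hx =>
    ((p.hasDerivAt x).mul (hasDerivAt_wgt hl hx)).congr_deriv
      (by simp only [eval_mul, eval_X]; ring)
  have h₁ := integrableOn_eval_mul_wgt l hζ (derivative p)
  have h₂ := (integrableOn_eval_mul_wgt (l - 1) hζ (X * p)).const_mul (2 * l - 1)
  have h₃ := (integrableOn_eval_mul_wgt l hζ p).const_mul ζ
  have hFTC := integral_Ioi_of_hasDerivAt_of_tendsto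
    (p.continuous.mul (continuous_wgt l ζ)).continuousWithinAt hderiv ((h₁.add h₂).sub h₃)
    (tendsto_eval_mul_wgt l hζ p)
  rw [Pi.mul_apply, wgt_one, mul_zero, sub_zero, integral_sub, integral_add,
    integral_const_mul, integral_const_mul] at hFTC
  · simp only [wgtIntegral_apply]
    linarith
  exacts [h₁, h₂, h₁.add h₂, h₃]

end WeightedIntegral

section Ladder

variable {l : ℕ} {ζ : ℝ}

noncomputable def raisingOp (l : ℕ) (p : ℝ[X]) : ℝ[X] :=
  C ((2 * (l : ℝ) - 1) / (2 * l + 1)) * ((X ^ 2 - 1) * derivative p) + C (2 * (l : ℝ) - 1) * (X * p)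

theorem natDegree_raisingOp_le (p : ℝ[X]) : (raisingOp l p).natDegree ≤ p.natDegree + 1 :=
  natDegree_add_le_of_degree_le
    ((natDegree_C_mul_le _ _).trans (natDegree_X_sq_sub_one_mul_derivative_le p))
    ((natDegree_C_mul_le _ _).trans (natDegree_mul_le.trans (by simp [add_comm])))

theorem coeff_raisingOp {p : ℝ[X]} {n : ℕ} (hp : p.natDegree ≤ n) :
    (raisingOp l p).coeff (n + 1) = (2 * l - 1) * (n + 2 * l + 1) / (2 * l + 1) * p.coeff n := by
  rw [raisingOp, coeff_add, coeff_C_mul, coeff_C_mul, coeff_X_sq_sub_one_mul_derivative hp,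
    coeff_X_mul]
  field_simp
  ring

theorem wgtIntegral_pred_raisingOp_mul (hl : 1 ≤ l) (hζ : 0 < ζ) (p q : ℝ[X]) :
    wgtIntegral (l - 1) hζ (raisingOp l p * q) =
      ζ * wgtIntegral l hζ (p * q) - wgtIntegral l hζ (p * derivative q) := by
  have hsplit : raisingOp l p * q =
      C ((2 * (l : ℝ) - 1) / (2 * l + 1)) *
          ((X ^ 2 - 1) * (derivative (p * q) - p * derivative q)) +
        C (2 * (l : ℝ) - 1) * (X * (p * q)) := by
    rw [raisingOp, derivative_mul]; ring
  rw [hsplit, map_add, wgtIntegral_pred_C_mul_X_sq_sub_one_mul hl, map_sub,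
    wgtIntegral_derivative hl, C_mul', map_smul, smul_eq_mul]
  ring

variable {P Q : ℕ → ℝ[X]}

theorem wgtIntegral_pred_raisingOp_mul_of_le (hl : 1 ≤ l) (hζ : 0 < ζ)
    (hP : IsOrthonormalSeq (wgtIntegral l hζ) P) (hQ : IsOrthonormalSeq (wgtIntegral (l - 1) hζ) Q)
    {j k : ℕ} (hjk : j ≤ k) :
    wgtIntegral (l - 1) hζ (raisingOp l (P k) * Q j) = if k = j then ζ * pC P Q k else 0 := by
  have hQj : (Q j).degree ≤ k := (hQ.degree_eq j).trans_le (by exact_mod_cast hjk)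
  rw [wgtIntegral_pred_raisingOp_mul hl, mul_comm (P k), hP.apply_mul_eq_coeff_div hQj,
    hQ.coeff_of_le hjk, mul_comm (P k),
    hP.apply_mul_eq_zero ((degree_derivative_lt (hQ.ne_zero j)).trans_le hQj)]
  rcases eq_or_ne j k with rfl | h
  · rw [if_pos rfl, if_pos rfl, pC]; ring
  · rw [if_neg h, if_neg h.symm]; ring

theorem wgtIntegral_mul_derivative_of_le (hl : 1 ≤ l) (hζ : 0 < ζ)
    (hP : IsOrthonormalSeq (wgtIntegral l hζ) P) (hQ : IsOrthonormalSeq (wgtIntegral (l - 1) hζ) Q)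
    {j n : ℕ} (hjn : j ≤ n) :
    wgtIntegral l hζ (P j * derivative (Q (n + 2))) =
      if n = j then ζ * rC l P Q (n + 1) else 0 := by
  have hPj : ((X ^ 2 - 1) * P j).degree ≤ ↑(n + 2) := by
    refine natDegree_le_iff_degree_le.1 (natDegree_mul_le.trans ?_)
    have : (X ^ 2 - 1 : ℝ[X]).natDegree ≤ 2 := by compute_degree
    rw [hP.natDegree_eq]; omega
  have hRj : (raisingOp l (P j)).degree < ↑(n + 2) := by
    refine (natDegree_le_iff_degree_le.1 (natDegree_raisingOp_le (P j))).trans_lt ?_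
    rw [hP.natDegree_eq]; exact_mod_cast (by omega : j + 1 < n + 2)
  have hadj := wgtIntegral_pred_raisingOp_mul hl hζ (P j) (Q (n + 2))
  rw [hQ.apply_mul_eq_zero hRj, ← wgtIntegral_pred_C_mul_X_sq_sub_one_mul hl, C_mul', map_smul,
    ← mul_assoc, hQ.apply_mul_eq_coeff_div hPj, coeff_X_sq_sub_one_mul_add_two, hP.coeff_of_le hjn,
    coeff_eq_zero_of_natDegree_lt (by rw [hP.natDegree_eq]; omega : (P j).natDegree < n + 2),
    sub_zero, smul_eq_mul] at hadj
  rcases eq_or_ne j n with rfl | h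
  · rw [if_pos rfl] at hadj
    rw [if_pos rfl, rC, if_neg j.succ_ne_zero, Nat.add_sub_cancel, show j + 1 + 1 = j + 2 from rfl]
    linear_combination hadj
  · rw [if_neg h] at hadj
    rw [if_neg h.symm]
    linear_combination hadj

theorem raisingOp_eq_of_isOrthonormalSeq (hl : 1 ≤ l) (hζ : 0 < ζ)
    (hP : IsOrthonormalSeq (wgtIntegral l hζ) P) (hQ : IsOrthonormalSeq (wgtIntegral (l - 1) hζ) Q)
    (k : ℕ) :
    raisingOp l (P k) = C ((k + 2 * l + 1) * ptC l P Q k) * Q (k + 1) + C (ζ * pC P Q k) * Q k := by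
  have hdeg : (raisingOp l (P k)).degree ≤ ↑(k + 1) :=
    natDegree_le_iff_degree_le.1 ((natDegree_raisingOp_le _).trans_eq (by rw [hP.natDegree_eq]))
  refine hQ.eq_of_forall_apply_mul_eq hdeg (hQ.degree_C_mul_add_C_mul_le _ _ le_rfl k.le_succ)
    fun j hj => ?_
  rw [hQ.apply_C_mul_add_C_mul_mul]
  rcases hj.eq_or_lt with rfl | hj
  · rw [hQ.apply_mul_eq_coeff_div hdeg, coeff_raisingOp (hP.natDegree_eq k).le, hP.coeff_self,
      if_pos rfl, if_neg (by omega), add_zero, ptC]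
    have := hP.leadingCoeff_ne_zero k
    have := hQ.leadingCoeff_ne_zero (k + 1)
    field_simp
  · rw [wgtIntegral_pred_raisingOp_mul_of_le hl hζ hP hQ (Nat.lt_succ_iff.1 hj),
      if_neg (show k + 1 ≠ j by omega), zero_add]

theorem derivative_eq_of_isOrthonormalSeq (hl : 1 ≤ l) (hζ : 0 < ζ)
    (hP : IsOrthonormalSeq (wgtIntegral l hζ) P) (hQ : IsOrthonormalSeq (wgtIntegral (l - 1) hζ) Q)
    (k : ℕ) :
    derivative (Q (k + 1)) =
      C ((2 * l - 1) / (2 * l + 1) * ((k + 1) / ptC l P Q k)) * P k +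
        C (ζ * rC l P Q k) * P (k - 1) := by
  have hdeg : (derivative (Q (k + 1))).degree ≤ k :=
    natDegree_le_iff_degree_le.1 ((natDegree_derivative_le _).trans_eq (by simp [hQ.natDegree_eq]))
  refine hP.eq_of_forall_apply_mul_eq hdeg (hP.degree_C_mul_add_C_mul_le _ _ le_rfl (k.sub_le 1))
    fun j hj => ?_
  rw [hP.apply_C_mul_add_C_mul_mul]
  rcases hj.eq_or_lt with rfl | hj
  · -- `j - 1 = j` only for `j = 0`, where `r₀ = 0`
    have hr : (if j - 1 = j then ζ * rC l P Q j else 0) = 0 := by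
      split_ifs with h
      · rw [rC, if_pos (by omega), mul_zero]
      · rfl
    rw [hP.apply_mul_eq_coeff_div hdeg, coeff_derivative, hQ.coeff_self, if_pos rfl, hr, add_zero,
      ptC]
    have := hP.leadingCoeff_ne_zero j
    have := hQ.leadingCoeff_ne_zero (j + 1)
    have : (2 * l - 1 : ℝ) ≠ 0 := by
      have : (1 : ℝ) ≤ l := by exact_mod_cast hl
      linarith
    field_simp
  · obtain ⟨n, rfl⟩ : ∃ n, k = n + 1 := ⟨k - 1, by omega⟩
    rw [mul_comm, wgtIntegral_mul_derivative_of_le hl hζ hP hQ (by omega : j ≤ n),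
      if_neg (show n + 1 ≠ j by omega), zero_add, Nat.add_sub_cancel]

end Ladder

theorem stmt11 (l : ℕ) (hl : 1 ≤ l) (ζ : ℝ) (hζ : 0 < ζ)
    (P Q : ℕ → Polynomial ℝ)
    (hP : IsOrthoFam l ζ P) (hQ : IsOrthoFam (l - 1) ζ Q) :
    ∀ k : ℕ, ∀ x : ℝ,
      -- (a)  (with the convention `P_{−1} = 0`, encoded by `r₀ = 0`)
      ((Polynomial.derivative (Q (k + 1))).eval x
          = ((2 * (l : ℝ) - 1) / (2 * (l : ℝ) + 1)) * (((k : ℝ) + 1) / ptC l P Q k)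
                * (P k).eval x
            + ζ * rC l P Q k * (P (k - 1)).eval x) ∧
      -- (b)
      ((2 * (l : ℝ) - 1) / (2 * (l : ℝ) + 1)) * (x ^ 2 - 1)
            * (Polynomial.derivative (P k)).eval x
          + (2 * (l : ℝ) - 1) * x * (P k).eval x
        = ((k : ℝ) + 2 * (l : ℝ) + 1) * ptC l P Q k * (Q (k + 1)).eval x
            + ζ * pC P Q k * (Q k).eval x := by
  intro k x
  have hP' := hP.isOrthonormalSeq hζ
  have hQ' := hQ.isOrthonormalSeq hζ
  constructor
  · have h := congrArg (eval x) (derivative_eq_of_isOrthonormalSeq hl hζ hP' hQ' k)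
    simp only [eval_add, eval_mul, eval_C] at h
    linear_combination h
  · have h := congrArg (eval x) (raisingOp_eq_of_isOrthonormalSeq hl hζ hP' hQ' k)
    simp only [raisingOp, eval_add, eval_mul, eval_C, eval_sub, eval_pow, eval_X, eval_one] at h
    linear_combination h
end

section
/- Fix ℓ ≥ 1, ζ > 0 and k ≥ 1, and let (P_j^{(ℓ)}) and (P_j^{(ℓ−1)}) be orthonormal families for ω^{(ℓ)}(·;ζ) and ω^{(ℓ−1)}(·;ζ). Then P_k^{(ℓ)} has exactly k simple real zeros x₁ < x₂ < ⋯ < x_k, all lying in (1,∞), P_{k+1}^{(ℓ−1)} has exactly k+1 simple real zeros y₁ < y₂ < ⋯ < y_{k+1}, all lying in (1,∞), and the two sets of zeros strictly interlace: 1 < y₁ < x₁ < y₂ < x₂ < ⋯ < x_k < y_{k+1}. -/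
/-!
Both families are orthogonal for positive functionals on `(1, ∞)`, so their zeros are real,
simple and lie in `(1, ∞)`. Since `ω^{(ℓ)} = c (x² − 1) ω^{(ℓ−1)}` with `c > 0`, `P_k^{(ℓ)}` is
`ω^{(ℓ−1)}`-orthogonal to `(x² − 1) g` for every `g` of degree `< k`. Gauss quadrature at the zeros
`y_j` of `P_{k+1}^{(ℓ−1)}` is exact up to degree `2k + 1` and has positive weights; applied to
`(x² − 1) P_k^{(ℓ)} ∏_{j ≠ m, m+1} (x − y_j)` it leaves only the nodes `y_m, y_{m+1}`, so
`P_k^{(ℓ)}` changes sign on each `(y_m, y_{m+1})`, which accounts for all of its `k` zeros.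
-/

open MeasureTheory Polynomial

open Filter Set Finset Asymptotics

namespace Polynomial

theorem eq_C_leadingCoeff_mul_prod_of_injective {R : Type*} [CommRing R] [IsDomain R]
    {f : R[X]} (hf : f ≠ 0) {n : ℕ} (hn : f.natDegree = n) {x : Fin n → R}
    (hx : Function.Injective x) (hroot : ∀ i, f.IsRoot (x i)) :
    f = C f.leadingCoeff * ∏ i, (X - C (x i)) := by
  have hle : univ.val.map x ≤ f.roots :=
    (Multiset.le_iff_subset (univ.nodup.map hx)).2 fun r hr => by
      obtain ⟨i, -, rfl⟩ := Multiset.mem_map.1 hr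
      exact (mem_roots hf).2 (hroot i)
  have hroots : f.roots = univ.val.map x :=
    (Multiset.eq_of_le_of_card_le hle (by simpa [hn] using f.card_roots')).symm
  have hfac := C_leadingCoeff_mul_prod_multiset_X_sub_C (p := f) (by simp [hroots, hn])
  rw [hroots, Multiset.map_map] at hfac
  exact hfac.symm

theorem even_rootMultiplicity_X_sub_C_pow {R : Type*} [CommRing R] [IsDomain R] {m : ℕ}
    (hm : Even m) (r c : R) : Even (rootMultiplicity r ((X - C c) ^ m)) := by
  rcases eq_or_ne r c with rfl | hrc
  · rwa [rootMultiplicity_X_sub_C_pow]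
  · rw [rootMultiplicity_eq_zero (by simp [sub_ne_zero.2 hrc])]
    exact .zero

theorem nonneg_or_nonpos_on_Ioi_of_even_rootMultiplicity {f : ℝ[X]} {a : ℝ}
    (hf : ∀ r, a < r → Even (f.rootMultiplicity r)) :
    (∀ x, a < x → 0 ≤ f.eval x) ∨ (∀ x, a < x → f.eval x ≤ 0) := by
  induction hn : f.natDegree using Nat.strong_induction_on generalizing f with
  | _ n ih =>
  rcases eq_or_ne f 0 with rfl | hf0
  · simp
  by_cases hroot : ∃ c, a < c ∧ f.IsRoot c
  · obtain ⟨c, hac, hc⟩ := hroot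
    obtain ⟨g, hfg, -⟩ := exists_eq_pow_rootMultiplicity_mul_and_not_dvd f hf0 c
    set m := f.rootMultiplicity c
    have hm : Even m := hf c hac
    have hpow0 : (X - C c) ^ m ≠ 0 := pow_ne_zero _ (X_sub_C_ne_zero c)
    have hg0 : g ≠ 0 := right_ne_zero_of_mul (hfg ▸ hf0)
    have hgdeg : g.natDegree < n := by
      have : 0 < m := (rootMultiplicity_pos hf0).2 hc
      rw [← hn, hfg, natDegree_mul hpow0 hg0, natDegree_pow, natDegree_X_sub_C]
      omega
    have hg : ∀ r, a < r → Even (g.rootMultiplicity r) := fun r hr => by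
      have := hf r hr
      rw [hfg, rootMultiplicity_mul (hfg ▸ hf0)] at this
      exact (Nat.even_add.1 this).1 (even_rootMultiplicity_X_sub_C_pow hm r c)
    have heval : ∀ x, f.eval x = (x - c) ^ m * g.eval x := fun x => by
      rw [hfg]; simp
    rcases ih _ hgdeg hg rfl with h | h
    · exact .inl fun x hx => heval x ▸ mul_nonneg (hm.pow_nonneg _) (h x hx)
    · exact .inr fun x hx => heval x ▸ mul_nonpos_of_nonneg_of_nonpos (hm.pow_nonneg _) (h x hx)
  · push Not at hroot
    by_contra! h
    obtain ⟨⟨u, hu, hfu⟩, ⟨v, hv, hfv⟩⟩ := h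
    obtain ⟨c, hc, hfc⟩ := isPreconnected_Ioi.intermediate_value hu hv
      f.continuous.continuousOn ⟨hfu.le, hfv.le⟩
    exact hroot c hc hfc

theorem exists_mem_Ioo_isRoot_of_eval_mul_eval_neg (p : ℝ[X]) {u v : ℝ} (huv : u ≤ v)
    (h : p.eval u * p.eval v < 0) : ∃ x ∈ Ioo u v, p.IsRoot x := by
  rcases mul_neg_iff.1 h with ⟨hu, hv⟩ | ⟨hu, hv⟩
  · exact intermediate_value_Ioo' huv p.continuous.continuousOn ⟨hv, hu⟩
  · exact intermediate_value_Ioo huv p.continuous.continuousOn ⟨hu, hv⟩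

end Polynomial

theorem map_mul_eq_zero_of_natDegree_lt {L : ℝ[X] →ₗ[ℝ] ℝ} {P : ℕ → ℝ[X]}
    (hdeg : ∀ j, (P j).degree = j) (horth : ∀ i j, i ≠ j → L (P i * P j) = 0) {n : ℕ}
    {g : ℝ[X]} (hg : g.natDegree < n) : L (P n * g) = 0 := by
  induction hd : g.natDegree using Nat.strong_induction_on generalizing g with
  | _ d ih =>
  rcases eq_or_ne g 0 with rfl | hg0
  · simp
  have hPd : P d ≠ 0 := by rintro h; simpa [h] using hdeg d
  set c := g.leadingCoeff / (P d).leadingCoeff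
  have hc : c ≠ 0 := div_ne_zero (leadingCoeff_ne_zero.2 hg0) (leadingCoeff_ne_zero.2 hPd)
  set r := g - C c * P d
  have hr : L (P n * r) = 0 := by
    rcases eq_or_ne r 0 with h | h
    · simp [h]
    have hdeg' : g.degree = (C c * P d).degree := by
      rw [degree_C_mul hc, hdeg d, ← hd, degree_eq_natDegree hg0]
    have hlc : g.leadingCoeff = (C c * P d).leadingCoeff := by
      rw [leadingCoeff_mul, leadingCoeff_C, div_mul_cancel₀ _ (leadingCoeff_ne_zero.2 hPd)]
    have hlt : r.natDegree < d := by
      rw [← hd]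
      exact natDegree_lt_natDegree h (degree_sub_lt_left hdeg' hg0 hlc)
    exact ih _ hlt (hlt.trans (hd ▸ hg)) rfl
  have hsplit : P n * g = P n * r + C c * (P n * P d) := by simp only [r]; ring
  rw [hsplit, map_add, ← smul_eq_C_mul, map_smul, hr, horth n d (hd ▸ hg).ne', smul_zero,
    add_zero]

def PositiveOnIoi (L : ℝ[X] →ₗ[ℝ] ℝ) (a : ℝ) : Prop :=
  ∀ p : ℝ[X], p ≠ 0 → (∀ x, a < x → 0 ≤ p.eval x) → 0 < L p

namespace PositiveOnIoi

variable {L : ℝ[X] →ₗ[ℝ] ℝ} {a : ℝ}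

theorem map_sq_pos (hL : PositiveOnIoi L a) (p : ℝ[X]) (hp : p ≠ 0) : 0 < L (p ^ 2) :=
  hL _ (pow_ne_zero 2 hp) fun x _ => by simpa using sq_nonneg (p.eval x)

theorem map_ne_zero (hL : PositiveOnIoi L a) {p : ℝ[X]} (hp : p ≠ 0)
    (hsign : (∀ x, a < x → 0 ≤ p.eval x) ∨ (∀ x, a < x → p.eval x ≤ 0)) : L p ≠ 0 := by
  rcases hsign with h | h
  · exact (hL p hp h).ne'
  · have := hL (-p) (neg_ne_zero.2 hp) fun x hx => by simpa using h x hx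
    rw [map_neg] at this
    linarith

/-- If fewer than `n` zeros of odd multiplicity lay in `(a, ∞)`, their product `t` would have
degree `< n` while `f * t` has constant sign there, so that `L (f * t) ≠ 0`. -/
theorem exists_roots_of_orthogonal (hL : PositiveOnIoi L a) {f : ℝ[X]} (hf : f ≠ 0) {n : ℕ}
    (hn : f.natDegree = n) (horth : ∀ g : ℝ[X], g.natDegree < n → L (f * g) = 0) :
    ∃ x : Fin n → ℝ, StrictMono x ∧ (∀ i, a < x i) ∧
      f = C f.leadingCoeff * ∏ i, (X - C (x i)) := by
  classical
  set T := f.roots.toFinset.filter fun r => a < r ∧ Odd (f.rootMultiplicity r)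
  set t : ℝ[X] := ∏ r ∈ T, (X - C r)
  have hT : T.card = n := by
    refine le_antisymm ?_ (not_lt.1 fun hlt => ?_)
    · calc T.card ≤ f.roots.toFinset.card := card_filter_le _ _
        _ ≤ Multiset.card f.roots := Multiset.toFinset_card_le _
        _ ≤ n := hn ▸ f.card_roots'
    have ht0 : t ≠ 0 := (monic_prod_of_monic _ _ fun r _ => monic_X_sub_C r).ne_zero
    have hft : ∀ r, a < r → Even ((f * t).rootMultiplicity r) := fun r hr => by
      rw [rootMultiplicity_mul (mul_ne_zero hf ht0), ← count_roots t, roots_prod_X_sub_C,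
        Multiset.count_eq_of_nodup T.nodup]
      by_cases hrT : r ∈ T
      · rw [if_pos (show r ∈ T.val from hrT)]
        exact (Finset.mem_filter.1 hrT).2.2.add_one
      · rw [if_neg (show r ∉ T.val from hrT), add_zero, ← Nat.not_odd_iff_even]
        intro hodd
        refine hrT (Finset.mem_filter.2 ⟨?_, hr, hodd⟩)
        exact Multiset.mem_toFinset.2 ((mem_roots hf).2 ((rootMultiplicity_pos hf).1 hodd.pos))
    refine hL.map_ne_zero (mul_ne_zero hf ht0)
      (nonneg_or_nonpos_on_Ioi_of_even_rootMultiplicity hft) (horth t ?_)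
    simpa [t, natDegree_prod_of_monic T (fun r => X - C r) fun r _ => monic_X_sub_C r] using hlt
  set x := T.orderEmbOfFin hT
  have hxT : ∀ i, x i ∈ T := T.orderEmbOfFin_mem hT
  refine ⟨x, x.strictMono, fun i => (Finset.mem_filter.1 (hxT i)).2.1,
    eq_C_leadingCoeff_mul_prod_of_injective hf hn x.injective fun i => ?_⟩
  exact (mem_roots hf).1 (Multiset.mem_toFinset.1 (Finset.mem_filter.1 (hxT i)).1)

end PositiveOnIoi

section GaussQuadrature

open Lagrange

variable (L : ℝ[X] →ₗ[ℝ] ℝ) {n : ℕ} {y : Fin n → ℝ}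

theorem gauss_quadrature (hy : Function.Injective y)
    (horth : ∀ g : ℝ[X], g.natDegree < n → L (nodal univ y * g) = 0) {F : ℝ[X]}
    (hF : F.natDegree < 2 * n) :
    L F = ∑ j, F.eval (y j) * L (Lagrange.basis univ y j) := by
  have hW : (nodal univ y).Monic := nodal_monic
  have hWdeg : (nodal univ y).natDegree = n := by simp [natDegree_nodal]
  have hrem : F %ₘ nodal univ y = interpolate univ y fun j => F.eval (y j) := by
    refine eq_interpolate_of_eval_eq _ hy.injOn ?_ fun j _ => ?_
    · simpa [degree_eq_natDegree hW.ne_zero, hWdeg] using degree_modByMonic_lt F hW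
    · rw [modByMonic_eq_sub_mul_div F, eval_sub, eval_mul, eval_nodal_at_node (mem_univ j),
        zero_mul, sub_zero]
  have hquot : L (nodal univ y * (F /ₘ nodal univ y)) = 0 :=
    horth _ (by rw [natDegree_divByMonic F hW, hWdeg]; omega)
  conv_lhs => rw [← modByMonic_add_div F (nodal univ y)]
  rw [map_add, hquot, add_zero, hrem, interpolate_apply, map_sum]
  simp only [C_mul', map_smul, smul_eq_mul]

theorem christoffel_pos (hL : ∀ p : ℝ[X], p ≠ 0 → 0 < L (p ^ 2)) (hy : Function.Injective y)
    (horth : ∀ g : ℝ[X], g.natDegree < n → L (nodal univ y * g) = 0) (i : Fin n) :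
    0 < L (Lagrange.basis univ y i) := by
  have hB : (Lagrange.basis univ y i).natDegree = n - 1 := by
    simpa using natDegree_basis hy.injOn (mem_univ i)
  have hquad := gauss_quadrature L hy horth (F := Lagrange.basis univ y i ^ 2) (by
    rw [natDegree_pow, hB]; have := i.pos; omega)
  rw [Fintype.sum_eq_single i fun j hji => by
    rw [eval_pow, eval_basis_of_ne hji.symm (mem_univ j)]; ring] at hquad
  rw [eval_pow, eval_basis_self hy.injOn (mem_univ i), one_pow, one_mul] at hquad
  exact hquad ▸ hL _ (basis_ne_zero hy.injOn (mem_univ i))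

end GaussQuadrature

theorem mul_neg_or_eq_zero_of_mul_add_mul_eq_zero {u v A B : ℝ} (hAB : 0 < A * B)
    (h : u * A + v * B = 0) : u * v < 0 ∨ u = 0 ∧ v = 0 := by
  have hA : A ≠ 0 := left_ne_zero_of_mul hAB.ne'
  have hB : B ≠ 0 := right_ne_zero_of_mul hAB.ne'
  rcases eq_or_ne v 0 with rfl | hv
  · simp_all
  · left
    have key : u * v * (A * B) = -(v * B) ^ 2 := by linear_combination v * B * h
    by_contra! huv
    nlinarith [mul_nonneg huv hAB.le, sq_pos_of_ne_zero (mul_ne_zero hv hB)]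

open Lagrange in
/-- Gauss quadrature at the zeros `y` applied to `ρ * p * ∏_{j ≠ m, m+1} (X - y j)` leaves only
the nodes `y m` and `y (m+1)`, where every factor other than `p` is positive. -/
theorem eval_mul_eval_neg_or_eq_zero_of_orthogonal {L : ℝ[X] →ₗ[ℝ] ℝ}
    (hL : ∀ p : ℝ[X], p ≠ 0 → 0 < L (p ^ 2)) {k : ℕ} {y : Fin (k + 1) → ℝ} (hy : StrictMono y)
    (horth : ∀ g : ℝ[X], g.natDegree < k + 1 → L (nodal univ y * g) = 0) {ρ p : ℝ[X]}
    (hρ : ρ.natDegree ≤ 2) (hρy : ∀ i, 0 < ρ.eval (y i)) (hp : p.natDegree ≤ k)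
    (hρp : ∀ g : ℝ[X], g.natDegree < k → L (ρ * p * g) = 0) (m : Fin k) :
    p.eval (y m.castSucc) * p.eval (y m.succ) < 0 ∨
      p.eval (y m.castSucc) = 0 ∧ p.eval (y m.succ) = 0 := by
  set a := m.castSucc
  set b := m.succ
  have hab : a < b := Fin.castSucc_lt_succ
  set g := nodal (univ \ {a, b}) y
  have hg : g.natDegree < k := by
    rw [natDegree_nodal, card_sdiff_of_subset (subset_univ _), card_pair hab.ne, card_univ,
      Fintype.card_fin]
    have := m.pos
    omega
  have hgg : 0 < g.eval (y a) * g.eval (y b) := by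
    rw [eval_nodal, eval_nodal, ← prod_mul_distrib]
    refine prod_pos fun i hi => ?_
    have : i < a ∨ b < i := by
      simp only [Finset.mem_sdiff, Finset.mem_univ, Finset.mem_insert, Finset.mem_singleton,
        true_and, not_or] at hi
      simp only [Fin.lt_def, Fin.ext_iff, a, b, Fin.val_castSucc, Fin.val_succ] at hi ⊢
      omega
    rcases this with h | h
    · exact mul_pos (sub_pos.2 (hy h)) (sub_pos.2 (hy (h.trans hab)))
    · exact mul_pos_of_neg_of_neg (sub_neg.2 (hy (hab.trans h))) (sub_neg.2 (hy h))
  have hquad := gauss_quadrature L hy.injective horth (F := ρ * p * g) <|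
    calc (ρ * p * g).natDegree ≤ (ρ * p).natDegree + g.natDegree := natDegree_mul_le
      _ ≤ ρ.natDegree + p.natDegree + g.natDegree := by gcongr; exact natDegree_mul_le
      _ < 2 * (k + 1) := by omega
  rw [hρp g hg, Fintype.sum_eq_add a b hab.ne fun j hj => by
    rw [eval_mul, eval_nodal_at_node (by simpa [not_or] using hj), mul_zero, zero_mul]] at hquad
  have hw := christoffel_pos L hL hy.injective horth
  refine mul_neg_or_eq_zero_of_mul_add_mul_eq_zero
    (A := ρ.eval (y a) * g.eval (y a) * L (Lagrange.basis univ y a))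
    (B := ρ.eval (y b) * g.eval (y b) * L (Lagrange.basis univ y b)) ?_ ?_
  · linarith [mul_pos (mul_pos (hρy a) (hρy b)) (mul_pos hgg (mul_pos (hw a) (hw b)))]
  · simp only [eval_mul] at hquad
    linear_combination -hquad

theorem PositiveOnIoi.exists_interlacing_roots {L : ℝ[X] →ₗ[ℝ] ℝ} {a : ℝ}
    (hL : PositiveOnIoi L a) {ρ p q : ℝ[X]} {k : ℕ} (hρ : ρ.natDegree ≤ 2)
    (hρpos : ∀ x, a < x → 0 < ρ.eval x) (hp0 : p ≠ 0) (hp : p.natDegree = k)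
    (hq : q.natDegree = k + 1) (hρp : ∀ g : ℝ[X], g.natDegree < k → L (ρ * p * g) = 0)
    (hq_orth : ∀ g : ℝ[X], g.natDegree < k + 1 → L (q * g) = 0) :
    ∃ x : Fin k → ℝ, ∃ y : Fin (k + 1) → ℝ, StrictMono x ∧ StrictMono y ∧
      (∀ i, a < x i) ∧ (∀ i, a < y i) ∧
      p = C p.leadingCoeff * ∏ i, (X - C (x i)) ∧
      q = C q.leadingCoeff * ∏ i, (X - C (y i)) ∧
      ∀ i : Fin k, y i.castSucc < x i ∧ x i < y i.succ := by
  have hq0 : q ≠ 0 := by rintro rfl; simp at hq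
  obtain ⟨y, hy, hya, hqy⟩ := hL.exists_roots_of_orthogonal hq0 hq hq_orth
  have hW : ∀ g : ℝ[X], g.natDegree < k + 1 → L (Lagrange.nodal univ y * g) = 0 := by
    intro g hg
    have := hq_orth g hg
    rwa [hqy, mul_assoc, ← smul_eq_C_mul, map_smul, smul_eq_mul,
      mul_eq_zero_iff_left (leadingCoeff_ne_zero.2 hq0)] at this
  have hsign := eval_mul_eval_neg_or_eq_zero_of_orthogonal hL.map_sq_pos hy hW hρ
    (fun i => hρpos _ (hya i)) hp.le hρp
  have hne : ∀ i, p.eval (y i) ≠ 0 := by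
    -- by `hsign`, a zero of `p` at one node would be a zero at all `k + 1` nodes
    have hiff : ∀ i, p.eval (y i) = 0 ↔ p.eval (y 0) = 0 :=
      Fin.induction Iff.rfl fun m ih => by
        rcases hsign m with h | h
        · exact ⟨fun h0 => absurd h (by simp [h0]), fun h0 => absurd h (by simp [ih.2 h0])⟩
        · exact (iff_of_true h.2 h.1).trans ih
    intro i hi
    exact hp0 (eq_zero_of_natDegree_lt_card_of_eval_eq_zero p hy.injective
      (fun j => (hiff j).2 ((hiff i).1 hi)) (by simp [hp]))
  have hchange : ∀ m : Fin k, ∃ x ∈ Ioo (y m.castSucc) (y m.succ), p.IsRoot x := fun m =>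
    p.exists_mem_Ioo_isRoot_of_eval_mul_eval_neg (hy Fin.castSucc_lt_succ).le
      ((hsign m).resolve_right fun h => hne _ h.1)
  choose x hx hroot using hchange
  have hxmono : StrictMono x := fun m m' hmm' =>
    (hx m).2.trans_le ((hy.monotone (Fin.succ_le_castSucc_iff.2 hmm')).trans (hx m').1.le)
  exact ⟨x, y, hxmono, hy, fun i => (hya _).trans (hx i).1, hya,
    eq_C_leadingCoeff_mul_prod_of_injective hp0 hp hxmono.injective hroot, hqy, hx⟩

noncomputable def weightedIntegral (w : ℝ → ℝ) (a : ℝ)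
    (hw : ∀ p : ℝ[X], IntegrableOn (fun x => p.eval x * w x) (Ioi a)) : ℝ[X] →ₗ[ℝ] ℝ where
  toFun p := ∫ x in Ioi a, p.eval x * w x
  map_add' p q := by simp only [eval_add, add_mul]; exact integral_add (hw p) (hw q)
  map_smul' c p := by
    simp only [eval_smul, smul_eq_mul, mul_assoc, RingHom.id_apply]
    exact integral_const_mul c _

theorem weightedIntegral_apply {w : ℝ → ℝ} {a : ℝ}
    {hw : ∀ p : ℝ[X], IntegrableOn (fun x => p.eval x * w x) (Ioi a)} (p : ℝ[X]) :
    weightedIntegral w a hw p = ∫ x in Ioi a, p.eval x * w x :=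
  rfl

theorem positiveOnIoi_weightedIntegral {w : ℝ → ℝ} {a : ℝ}
    {hw : ∀ p : ℝ[X], IntegrableOn (fun x => p.eval x * w x) (Ioi a)}
    (hpos : ∀ x, a < x → 0 < w x) : PositiveOnIoi (weightedIntegral w a hw) a := by
  intro p hp hnn
  rw [weightedIntegral_apply, setIntegral_pos_iff_support_of_nonneg_ae _ (hw p)]
  · have hroots : volume {x : ℝ | p.IsRoot x} = 0 := (p.finite_setOfPred_isRoot hp).measure_zero _
    have hvol : 0 < volume (Ioi a \ {x | p.IsRoot x}) := by
      rw [measure_sdiff_null hroots, Real.volume_Ioi]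
      simp
    exact hvol.trans_le
      (measure_mono fun x ⟨hxa, hxr⟩ => ⟨mul_ne_zero hxr (hpos x hxa).ne', hxa⟩)
  · filter_upwards [ae_restrict_mem measurableSet_Ioi] with x hx
    exact mul_nonneg (hnn x hx) (hpos x hx).le

noncomputable def unnormalizedWgt (l : ℕ) (ζ x : ℝ) : ℝ :=
  (x ^ 2 - 1) ^ ((l : ℝ) + 1 / 2) * Real.exp (-ζ * x)

section UnnormalizedWgt

variable (l : ℕ) (ζ : ℝ)

theorem wgt_eq_mul_unnormalizedWgt (x : ℝ) :
    wgt l ζ x = ζ / ((2 * l + 1) * K2 ζ) * unnormalizedWgt l ζ x := by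
  rw [wgt, unnormalizedWgt]
  ring

theorem unnormalizedWgt_succ {x : ℝ} (hx : 1 < x) :
    unnormalizedWgt (l + 1) ζ x = (x ^ 2 - 1) * unnormalizedWgt l ζ x := by
  have hx2 : 0 < x ^ 2 - 1 := by nlinarith
  rw [unnormalizedWgt, unnormalizedWgt, Nat.cast_succ, add_right_comm,
    Real.rpow_add_one hx2.ne']
  ring

theorem unnormalizedWgt_pos {x : ℝ} (hx : 1 < x) : 0 < unnormalizedWgt l ζ x :=
  mul_pos (Real.rpow_pos_of_pos (by nlinarith) _) (Real.exp_pos _)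

theorem continuous_unnormalizedWgt : Continuous (unnormalizedWgt l ζ) :=
  ((continuous_pow 2).sub continuous_const |>.rpow_const fun _ => .inr (by positivity)).mul
    (by fun_prop)

theorem unnormalizedWgt_le {x : ℝ} (hx : 1 < x) :
    unnormalizedWgt l ζ x ≤ x ^ (2 * l + 1) * Real.exp (-ζ * x) := by
  have hx0 : 0 ≤ x := by linarith
  rw [unnormalizedWgt]
  gcongr
  calc (x ^ 2 - 1) ^ ((l : ℝ) + 1 / 2) ≤ (x ^ 2) ^ ((l : ℝ) + 1 / 2) :=
        Real.rpow_le_rpow (by nlinarith) (by linarith) (by positivity)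
    _ = x ^ (2 * l + 1) := by
        rw [← Real.rpow_natCast_mul hx0, ← Real.rpow_natCast]
        push_cast
        ring_nf

variable {ζ}

theorem integrableOn_eval_mul_unnormalizedWgt (hζ : 0 < ζ) (p : ℝ[X]) :
    IntegrableOn (fun x => p.eval x * unnormalizedWgt l ζ x) (Ioi 1) := by
  set q := p * X ^ (2 * l + 1)
  refine integrable_of_isBigO_exp_neg (half_pos hζ)
    (p.continuous.mul (continuous_unnormalizedWgt l ζ)).continuousOn ?_
  have hbound : (fun x => p.eval x * unnormalizedWgt l ζ x)
      =O[atTop] fun x => q.eval x * Real.exp (-ζ * x) := by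
    refine IsBigO.of_bound 1 ?_
    filter_upwards [eventually_gt_atTop 1] with x hx
    have h0 := (unnormalizedWgt_pos l ζ hx).le
    simp only [q, eval_mul, eval_pow, eval_X, norm_mul, Real.norm_eq_abs, one_mul, abs_pow,
      abs_of_nonneg h0, abs_of_pos (Real.exp_pos _), abs_of_pos (zero_lt_one.trans hx), mul_assoc]
    exact mul_le_mul_of_nonneg_left (unnormalizedWgt_le l ζ hx) (abs_nonneg _)
  have hq : (fun x => q.eval x) =O[atTop] fun x => x ^ q.natDegree := by
    simpa using isBigO_atTop_of_degree_le q (X ^ q.natDegree) (by simp [degree_le_natDegree])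
  have hexp : (fun x => x ^ q.natDegree * Real.exp (-ζ * x))
      =O[atTop] fun x => Real.exp (-(ζ / 2) * x) := by
    refine ((isLittleO_pow_exp_pos_mul_atTop _ (half_pos hζ)).isBigO.mul
      (isBigO_refl (fun x => Real.exp (-ζ * x)) atTop)).congr_right fun x => ?_
    rw [← Real.exp_add]
    ring_nf
  exact hbound.trans ((hq.mul (isBigO_refl _ _)).trans hexp)

end UnnormalizedWgt

section GradFunctional

variable {ζ : ℝ} (hζ : 0 < ζ)

noncomputable abbrev gradFunctional (l : ℕ) : ℝ[X] →ₗ[ℝ] ℝ :=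
  weightedIntegral (unnormalizedWgt l ζ) 1 (integrableOn_eval_mul_unnormalizedWgt l hζ)

theorem gradFunctional_X_sq_sub_one_mul (l : ℕ) (p : ℝ[X]) :
    gradFunctional hζ l ((X ^ 2 - 1) * p) = gradFunctional hζ (l + 1) p :=
  setIntegral_congr_fun measurableSet_Ioi fun x hx => by
    simp only [eval_mul, eval_sub, eval_pow, eval_X, eval_one, unnormalizedWgt_succ l ζ hx]
    ring

/-- Orthogonality does not see the normalizing constant of `wgt`; normalization only forces it
to be nonzero. -/
theorem IsOrthoFam.orthogonal {l : ℕ} {P : ℕ → ℝ[X]} (hP : IsOrthoFam l ζ P) {n : ℕ}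
    {g : ℝ[X]} (hg : g.natDegree < n) : gradFunctional hζ l (P n * g) = 0 := by
  set c := ζ / ((2 * l + 1) * K2 ζ) with hc_def
  have hint : ∀ i j, ∫ x in Ioi 1, (P i).eval x * (P j).eval x * wgt l ζ x
      = c * gradFunctional hζ l (P i * P j) := fun i j => by
    rw [weightedIntegral_apply, ← integral_const_mul]
    congr 1 with x
    rw [wgt_eq_mul_unnormalizedWgt, ← hc_def, eval_mul]
    ring
  have hc : c ≠ 0 := left_ne_zero_of_mul_eq_one (by simpa [hint] using hP.2.2 0 0)
  refine map_mul_eq_zero_of_natDegree_lt hP.1 (fun i j hij => ?_) hg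
  have := hP.2.2 i j
  rw [if_neg hij, hint] at this
  exact (mul_eq_zero.1 this).resolve_left hc

end GradFunctional

theorem stmt12_general (l : ℕ) (hl : 1 ≤ l) (ζ : ℝ) (hζ : 0 < ζ)
    (P Q : ℕ → Polynomial ℝ)
    (hP : IsOrthoFam l ζ P) (hQ : IsOrthoFam (l - 1) ζ Q)
    (k : ℕ) :
    ∃ x : Fin k → ℝ, ∃ y : Fin (k + 1) → ℝ,
      StrictMono x ∧ StrictMono y ∧
      (∀ i, 1 < x i) ∧ (∀ i, 1 < y i) ∧
      -- `P_k^{(ℓ)}` has exactly `k` simple real zeros `x₁ < ⋯ < x_k`: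
      P k = Polynomial.C (P k).leadingCoeff
              * ∏ i : Fin k, (Polynomial.X - Polynomial.C (x i)) ∧
      -- `P_{k+1}^{(ℓ−1)}` has exactly `k+1` simple real zeros `y₁ < ⋯ < y_{k+1}`:
      Q (k + 1) = Polynomial.C (Q (k + 1)).leadingCoeff
              * ∏ i : Fin (k + 1), (Polynomial.X - Polynomial.C (y i)) ∧
      -- strict interlacing `1 < y₁ < x₁ < y₂ < ⋯ < x_k < y_{k+1}`:
      ∀ i : Fin k, y i.castSucc < x i ∧ x i < y i.succ := by
  obtain ⟨l, rfl⟩ := Nat.exists_eq_add_of_le' hl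
  rw [Nat.add_sub_cancel] at hQ
  have hL : PositiveOnIoi (gradFunctional hζ l) 1 :=
    positiveOnIoi_weightedIntegral fun _ => unnormalizedWgt_pos l ζ
  have hρ : ∀ x : ℝ, 1 < x → 0 < (X ^ 2 - 1 : ℝ[X]).eval x := fun x hx => by
    simp only [eval_sub, eval_pow, eval_X, eval_one]
    nlinarith
  refine hL.exists_interlacing_roots (by compute_degree) hρ (leadingCoeff_ne_zero.1 (hP.2.1 k).ne')
    (natDegree_eq_of_degree_eq_some (hP.1 k)) (natDegree_eq_of_degree_eq_some (hQ.1 (k + 1)))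
    (fun g hg => ?_) fun g hg => hQ.orthogonal hζ hg
  rw [mul_assoc, gradFunctional_X_sq_sub_one_mul]
  exact hP.orthogonal hζ hg

theorem stmt12 (l : ℕ) (hl : 1 ≤ l) (ζ : ℝ) (hζ : 0 < ζ)
    (P Q : ℕ → Polynomial ℝ)
    (hP : IsOrthoFam l ζ P) (hQ : IsOrthoFam (l - 1) ζ Q)
    (k : ℕ) (hk : 1 ≤ k) :
    ∃ x : Fin k → ℝ, ∃ y : Fin (k + 1) → ℝ,
      StrictMono x ∧ StrictMono y ∧
      (∀ i, 1 < x i) ∧ (∀ i, 1 < y i) ∧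
      -- `P_k^{(ℓ)}` has exactly `k` simple real zeros `x₁ < ⋯ < x_k`:
      P k = Polynomial.C (P k).leadingCoeff
              * ∏ i : Fin k, (Polynomial.X - Polynomial.C (x i)) ∧
      -- `P_{k+1}^{(ℓ−1)}` has exactly `k+1` simple real zeros `y₁ < ⋯ < y_{k+1}`:
      Q (k + 1) = Polynomial.C (Q (k + 1)).leadingCoeff
              * ∏ i : Fin (k + 1), (Polynomial.X - Polynomial.C (y i)) ∧
      -- strict interlacing `1 < y₁ < x₁ < y₂ < ⋯ < x_k < y_{k+1}`:
      ∀ i : Fin k, y i.castSucc < x i ∧ x i < y i.succ :=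
  stmt12_general l hl ζ hζ P Q hP hQ k
end
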